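/- arXiv:0909.1866 — 10 statements merged into one kernel-verified Lean document; each statement's English description precedes it below -/
import Mathlib

section
/- Let (X,d) be a nonempty metric space. For every x ∈ X, the function f_x defined by f_x(y) = d(x,y) belongs to the tight span T(X), and for every f ∈ T(X) one has d_T(f, f_x) = sup_{y ∈ X} |f(y) − d(x,y)| = f(x). Consequently, the canonical embedding x ↦ f_x is an isometric embedding of X into T(X): d_T(f_x, f_{x'}) = d(x,x') for all x, x' ∈ X. -/
/-- The tight span of a metric space `X`: the set of functions `f : X → ℝ` with
`f x + f y ≥ d(x,y)` for all `x, y` and `inf_y (f x + f y - d(x,y)) = 0` for all `x`. -/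
def TightSpan (X : Type*) [MetricSpace X] : Set (X → ℝ) :=
  {f | (∀ x y, dist x y ≤ f x + f y) ∧ ∀ x, (⨅ y, (f x + f y - dist x y)) = 0}

lemma tightspan_mem {X : Type*} [MetricSpace X] (x : X) :
    (fun y => dist x y) ∈ TightSpan X := by
  have : Nonempty X := ⟨x⟩
  constructor
  · intro z y
    calc dist z y ≤ dist z x + dist x y := dist_triangle z x y
    _ = dist x z + dist x y := by rw [dist_comm]
  · intro z
    apply le_antisymm
    · have h := ciInf_le (f := fun y => dist x z + dist x y - dist z y)
        ⟨0, by rintro r ⟨y, rfl⟩; simp only; nlinarith [dist_triangle z x y, dist_comm z x]⟩ x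
      simp only [dist_comm z x] at h
      simpa using h
    · apply le_ciInf
      intro y
      nlinarith [dist_triangle z x y, dist_comm z x]

lemma tightspan_lip {X : Type*} [MetricSpace X] {f : X → ℝ} (hf : f ∈ TightSpan X)
    (x y : X) : f y ≤ f x + dist x y := by
  have : Nonempty X := ⟨x⟩
  obtain ⟨h1, h2⟩ := hf
  apply le_of_forall_pos_le_add
  intro ε hε
  have hlt : (⨅ w, (f y + f w - dist y w)) < ε := by rw [h2 y]; exact hε
  obtain ⟨w, hw⟩ := exists_lt_of_ciInf_lt hlt
  have t1 : dist y w ≤ dist y x + dist x w := dist_triangle y x w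
  have t2 : dist x w ≤ f x + f w := h1 x w
  have : dist x y = dist y x := dist_comm x y
  linarith

lemma tightspan_sup {X : Type*} [MetricSpace X] [Nonempty X] {f : X → ℝ}
    (hf : f ∈ TightSpan X) (x : X) : (⨆ y, |f y - dist x y|) = f x := by
  have hfx0 : 0 ≤ f x := by nlinarith [hf.1 x x, dist_self x]
  have hb : ∀ y, |f y - dist x y| ≤ f x := by
    intro y
    rw [abs_le]
    constructor
    · have := hf.1 x y
      linarith
    · have := tightspan_lip hf x y
      linarith
  apply le_antisymm
  · exact ciSup_le hb
  · have h := le_ciSup (f := fun y => |f y - dist x y|) ⟨f x, by rintro r ⟨y, rfl⟩; exact hb y⟩ x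
    simp only [dist_self, sub_zero] at h
    rwa [abs_of_nonneg hfx0] at h

theorem stmt2 {X : Type*} [MetricSpace X] [Nonempty X] :
    (∀ x : X, (fun y => dist x y) ∈ TightSpan X) ∧
    (∀ f ∈ TightSpan X, ∀ x : X, (⨆ y, |f y - dist x y|) = f x) ∧
    (∀ x x' : X, (⨆ y, |dist x y - dist x' y|) = dist x x') := by
  refine ⟨tightspan_mem, fun f hf x => tightspan_sup hf x, ?_⟩
  intro x x'
  have h := tightspan_sup (tightspan_mem x') x
  simp only [abs_sub_comm] at h
  rw [h, dist_comm]
end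

section
/- Let (X,d) be a metric space, let y ∈ X, and suppose Y = X \ {y} is nonempty. For every f in the tight span T(Y), the function g : X → ℝ defined by g(x) = f(x) for x ∈ Y and g(y) = sup_{x ∈ Y} (d(x,y) − f(x)) is the unique element of T(X) whose restriction to Y equals f. -/
open Classical in
noncomputable def extFun {X : Type*} [MetricSpace X] (y : X)
    (f : {x : X // x ≠ y} → ℝ) : X → ℝ :=
  fun x =>
    if h : x ≠ y then f ⟨x, h⟩
    else ⨆ x' : {x : X // x ≠ y}, (dist (x' : X) y - f x')

theorem stmt3 {X : Type*} [MetricSpace X] (y : X) [Nonempty {x : X // x ≠ y}]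
    (f : {x : X // x ≠ y} → ℝ) (hf : f ∈ TightSpan {x : X // x ≠ y}) :
    extFun y f ∈ TightSpan X ∧
    (∀ x : {x : X // x ≠ y}, extFun y f x = f x) ∧
    (extFun y f y = ⨆ x' : {x : X // x ≠ y}, (dist (x' : X) y - f x')) ∧
    ∀ g ∈ TightSpan X, (∀ x : {x : X // x ≠ y}, g x = f x) → g = extFun y f := by
  classical
  haveI : Nonempty X := ⟨y⟩
  obtain ⟨hf1, hf2⟩ := hf
  obtain ⟨a0⟩ := ‹Nonempty {x : X // x ≠ y}›
  set M := ⨆ x' : {x : X // x ≠ y}, (dist (x' : X) y - f x') with hMdef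
  have hbddA : BddAbove (Set.range fun x' : {x : X // x ≠ y} => dist (x' : X) y - f x') := by
    refine ⟨f a0 + dist (a0 : X) y, ?_⟩
    rintro _ ⟨x', rfl⟩
    have h1 : dist (x' : X) y ≤ dist (x' : X) (a0 : X) + dist (a0 : X) y := dist_triangle _ _ _
    have h2 : dist x' a0 ≤ f x' + f a0 := hf1 x' a0
    have h3 : dist x' a0 = dist (x' : X) (a0 : X) := Subtype.dist_eq x' a0
    simp only [Set.mem_setOf_eq]; linarith
  have hMge : ∀ x' : {x : X // x ≠ y}, dist (x' : X) y - f x' ≤ M :=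
    fun x' => le_ciSup hbddA x'
  have hbddB : ∀ x : {x : X // x ≠ y}, BddBelow (Set.range fun z => f x + f z - dist x z) := by
    intro x; refine ⟨0, ?_⟩; rintro _ ⟨z, rfl⟩
    have := hf1 x z; simp only [Set.mem_setOf_eq]; linarith
  have hexists : ∀ (x : {x : X // x ≠ y}) (ε : ℝ), 0 < ε →
      ∃ z, f x + f z - dist x z < ε := by
    intro x ε hε
    have h : (⨅ z, (f x + f z - dist x z)) < ε := by rw [hf2 x]; exact hε
    exact exists_lt_of_ciInf_lt h
  have hM0 : 0 ≤ M := by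
    refine le_of_forall_pos_le_add (fun ε hε => ?_)
    obtain ⟨z, hz⟩ := hexists a0 ε hε
    have h1 := hMge a0
    have h2 := hMge z
    have htri : dist (a0 : X) (z : X) ≤ dist (a0 : X) y + dist (z : X) y :=
      dist_triangle_right _ _ _
    have hd : dist a0 z = dist (a0 : X) (z : X) := Subtype.dist_eq a0 z
    linarith
  have hgv : ∀ x : {x : X // x ≠ y}, extFun y f x = f x := by
    intro x
    simp only [extFun, dif_pos x.2]
  have hgy : extFun y f y = M := by
    simp only [extFun, dif_neg (not_not_intro rfl), hMdef]
  -- triangle inequality for extFun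
  have hg1 : ∀ a b : X, dist a b ≤ extFun y f a + extFun y f b := by
    intro a b
    by_cases ha : a = y <;> by_cases hb : b = y
    · rw [ha, hb, hgy]; simp; linarith
    · rw [ha, hgy, hgv ⟨b, hb⟩]
      have h1 := hMge ⟨b, hb⟩
      have h2 : dist y b = dist b y := dist_comm y b
      simp only at h1
      linarith
    · rw [hb, hgy, hgv ⟨a, ha⟩]
      have h1 := hMge ⟨a, ha⟩
      simp only at h1
      linarith
    · rw [hgv ⟨a, ha⟩, hgv ⟨b, hb⟩]
      have := hf1 ⟨a, ha⟩ ⟨b, hb⟩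
      rwa [Subtype.dist_eq] at this
  have hbddBg : ∀ x : X, BddBelow (Set.range fun z : X => extFun y f x + extFun y f z - dist x z) := by
    intro x; refine ⟨0, ?_⟩; rintro _ ⟨z, rfl⟩
    have := hg1 x z; simp only [Set.mem_setOf_eq]; linarith
  have hg2 : ∀ x : X, (⨅ z : X, (extFun y f x + extFun y f z - dist x z)) = 0 := by
    intro x
    refine le_antisymm ?_ (le_ciInf fun z => by have := hg1 x z; linarith)
    refine le_of_forall_pos_le_add (fun ε hε => ?_)
    by_cases hx : x = y
    · rw [hx]
      have hlt : M - ε < M := by linarith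
      obtain ⟨x', hx'⟩ := exists_lt_of_lt_ciSup hlt
      have hle : (⨅ z : X, (extFun y f y + extFun y f z - dist y z)) ≤
          extFun y f y + extFun y f (x' : X) - dist y (x' : X) := ciInf_le (hbddBg y) _
      refine hle.trans ?_
      rw [hgy, hgv x']
      have hd : dist y (x' : X) = dist (x' : X) y := dist_comm y _
      linarith
    · obtain ⟨z, hz⟩ := hexists ⟨x, hx⟩ ε hε
      have hle : (⨅ z : X, (extFun y f x + extFun y f z - dist x z)) ≤
          extFun y f x + extFun y f (z : X) - dist x (z : X) := ciInf_le (hbddBg x) _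
      refine hle.trans ?_
      rw [hgv z]
      have hgx : extFun y f x = f ⟨x, hx⟩ := hgv ⟨x, hx⟩
      have hd : dist (⟨x, hx⟩ : {x : X // x ≠ y}) z = dist x (z : X) := Subtype.dist_eq _ _
      linarith
  refine ⟨⟨hg1, hg2⟩, hgv, hgy, ?_⟩
  intro g hg hgf
  obtain ⟨hg1', hg2'⟩ := hg
  have hgyM : g y = M := by
    refine le_antisymm ?_ ?_
    · refine le_of_forall_pos_le_add (fun ε hε => ?_)
      have h : (⨅ z : X, (g y + g z - dist y z)) < ε := by rw [hg2' y]; exact hε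
      obtain ⟨z, hz⟩ := exists_lt_of_ciInf_lt h
      by_cases hzy : z = y
      · rw [hzy] at hz; simp at hz; linarith
      · rw [hgf ⟨z, hzy⟩] at hz
        have h1 := hMge ⟨z, hzy⟩
        have h2 : dist y z = dist z y := dist_comm y z
        simp only at h1
        linarith
    · refine ciSup_le (fun x' => ?_)
      have h1 := hg1' (x' : X) y
      rw [hgf x'] at h1
      linarith
  funext x
  by_cases hx : x = y
  · rw [hx, hgyM, hgy]
  · rw [hgv ⟨x, hx⟩, hgf ⟨x, hx⟩]
end

section
/- Let (X,d) be a metric space, let y ∈ X, and suppose Y = X \ {y} is nonempty. The map Φ : T(Y) → T(X) that sends each f ∈ T(Y) to its unique extension g ∈ T(X) (given by g(x) = f(x) for x ∈ Y and g(y) = sup_{x ∈ Y} (d(x,y) − f(x))) is an isometric embedding of T(Y) into T(X) satisfying Φ(d(x,·)|_Y) = d(x,·) for every x ∈ Y, and Φ is the unique isometric embedding of T(Y) into T(X) that maps each function d(x,·)|_Y (x ∈ Y) to d(x,·). -/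
set_option linter.unusedSectionVars false

section general
variable {Z : Type*} [MetricSpace Z] [Nonempty Z]

lemma ts_nonneg {f : Z → ℝ} (hf : f ∈ TightSpan Z) (x : Z) : 0 ≤ f x := by
  have h := hf.1 x x; simp at h; linarith

lemma ts_exists {f : Z → ℝ} (hf : f ∈ TightSpan Z) (x : Z) {ε : ℝ} (hε : 0 < ε) :
    ∃ z, f x + f z - dist x z < ε := by
  by_contra h
  push_neg at h
  have h2 : ε ≤ ⨅ z, (f x + f z - dist x z) := le_ciInf h
  rw [hf.2 x] at h2
  linarith

lemma ts_lip {f : Z → ℝ} (hf : f ∈ TightSpan Z) (x z : Z) : f x ≤ dist x z + f z := by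
  apply le_of_forall_pos_le_add
  intro ε hε
  obtain ⟨w, hw⟩ := ts_exists hf x hε
  have h1 := hf.1 z w
  have h2 := dist_triangle x z w
  linarith

lemma ts_dist_mem {Z : Type*} [MetricSpace Z] [Nonempty Z] (x : Z) : (fun z => dist x z) ∈ TightSpan Z := by
  constructor
  · intro a b
    have h1 := dist_triangle a x b
    have h2 := dist_comm a x
    linarith
  · intro z
    apply le_antisymm
    · have hb : BddBelow (Set.range fun w => dist x z + dist x w - dist z w) := by
        refine ⟨0, ?_⟩
        rintro r ⟨w, rfl⟩
        have h1 := dist_triangle z x w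
        have h2 := dist_comm x z
        simp only
        linarith
      calc (⨅ w, (dist x z + dist x w - dist z w)) ≤ dist x z + dist x x - dist z x :=
            ciInf_le hb x
        _ = 0 := by rw [dist_self, dist_comm z x]; ring
    · apply le_ciInf
      intro w
      have h1 := dist_triangle z x w
      have h2 := dist_comm x z
      linarith

lemma ts_dist_sup {Z : Type*} [MetricSpace Z] {g : Z → ℝ} [Nonempty Z] (hg : g ∈ TightSpan Z) (x : Z) :
    (⨆ z, |g z - dist x z|) = g x := by
  have hb : ∀ z, |g z - dist x z| ≤ g x := by
    intro z
    rw [abs_le]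
    constructor
    · have := hg.1 x z; linarith
    · have h1 := ts_lip hg z x
      have h2 := dist_comm z x
      linarith
  apply le_antisymm (ciSup_le hb)
  have h0 : g x = |g x - dist x x| := by
    rw [dist_self, sub_zero, abs_of_nonneg (ts_nonneg hg x)]
  rw [h0]
  exact le_ciSup ⟨g x, by rintro r ⟨z, rfl⟩; exact hb z⟩ x

end general

section ext
variable {X : Type*} [MetricSpace X] (y : X) [Nonempty {x : X // x ≠ y}]

lemma Sf_bdd {f : {x : X // x ≠ y} → ℝ} (hf : f ∈ TightSpan {x : X // x ≠ y}) :
    BddAbove (Set.range fun x' : {x : X // x ≠ y} => dist (x' : X) y - f x') := by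
  obtain ⟨x0⟩ := ‹Nonempty {x : X // x ≠ y}›
  refine ⟨dist y (x0 : X) + f x0, ?_⟩
  rintro r ⟨x', rfl⟩
  have h1 := hf.1 x' x0
  rw [Subtype.dist_eq] at h1
  have h2 := dist_triangle (x' : X) (x0 : X) y
  have h3 := dist_comm y (x0 : X)
  have h4 := dist_comm (x0 : X) y
  simp only
  linarith

lemma Sf_le {f : {x : X // x ≠ y} → ℝ} (hf : f ∈ TightSpan {x : X // x ≠ y})
    (x' : {x : X // x ≠ y}) :
    dist (x' : X) y - f x' ≤ ⨆ x' : {x : X // x ≠ y}, (dist (x' : X) y - f x') :=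
  le_ciSup (Sf_bdd y hf) x'

lemma Sf_nonneg {f : {x : X // x ≠ y} → ℝ} (hf : f ∈ TightSpan {x : X // x ≠ y}) :
    0 ≤ ⨆ x' : {x : X // x ≠ y}, (dist (x' : X) y - f x') := by
  set S := ⨆ x' : {x : X // x ≠ y}, (dist (x' : X) y - f x') with hS
  have key : ∀ ε : ℝ, 0 < ε → -ε ≤ 2 * S := by
    intro ε hε
    obtain ⟨x0⟩ := ‹Nonempty {x : X // x ≠ y}›
    obtain ⟨z, hz⟩ := ts_exists hf x0 hε
    rw [Subtype.dist_eq] at hz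
    have h1 := Sf_le y hf x0
    have h2 := Sf_le y hf z
    have h3 := dist_triangle (x0 : X) y (z : X)
    have h4 := dist_comm y (z : X)
    linarith
  by_contra h
  push_neg at h
  have := key (-S) (by linarith)
  linarith

lemma Sf_approx {f : {x : X // x ≠ y} → ℝ} {ε : ℝ} (hε : 0 < ε) :
    ∃ x' : {x : X // x ≠ y},
      (⨆ x' : {x : X // x ≠ y}, (dist (x' : X) y - f x')) - ε < dist (x' : X) y - f x' := by
  apply exists_lt_of_lt_ciSup
  linarith [le_refl (⨆ x' : {x : X // x ≠ y}, (dist (x' : X) y - f x'))]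

lemma extFun_apply_ne (f : {x : X // x ≠ y} → ℝ) (x : {x : X // x ≠ y}) :
    extFun y f (x : X) = f x := by
  simp only [extFun, dif_pos x.2]

lemma extFun_apply_eq (f : {x : X // x ≠ y} → ℝ) :
    extFun y f y = ⨆ x' : {x : X // x ≠ y}, (dist (x' : X) y - f x') := by
  simp only [extFun]
  rw [dif_neg (by simp)]

-- Part 1: extFun maps T(Y) into T(X)
lemma ext_tri {f : {x : X // x ≠ y} → ℝ} (hf : f ∈ TightSpan {x : X // x ≠ y})
    (a b : X) : dist a b ≤ extFun y f a + extFun y f b := by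
  by_cases ha : a = y <;> by_cases hb : b = y
  · rw [ha, hb, dist_self, extFun_apply_eq]
    linarith [Sf_nonneg y hf]
  · rw [ha, extFun_apply_eq]
    have h1 := Sf_le y hf ⟨b, hb⟩
    have h2 : extFun y f b = f ⟨b, hb⟩ := extFun_apply_ne y f ⟨b, hb⟩
    have h3 := dist_comm y b
    simp only at h1
    linarith
  · rw [hb, extFun_apply_eq]
    have h1 := Sf_le y hf ⟨a, ha⟩
    have h2 : extFun y f a = f ⟨a, ha⟩ := extFun_apply_ne y f ⟨a, ha⟩
    simp only at h1
    linarith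
  · have h1 := hf.1 ⟨a, ha⟩ ⟨b, hb⟩
    rw [Subtype.dist_eq] at h1
    have h2 : extFun y f a = f ⟨a, ha⟩ := extFun_apply_ne y f ⟨a, ha⟩
    have h3 : extFun y f b = f ⟨b, hb⟩ := extFun_apply_ne y f ⟨b, hb⟩
    rw [h2, h3]
    exact h1

lemma ext_mem {f : {x : X // x ≠ y} → ℝ} (hf : f ∈ TightSpan {x : X // x ≠ y}) :
    extFun y f ∈ TightSpan X := by
  have hne : Nonempty X := ⟨y⟩
  refine ⟨ext_tri y hf, ?_⟩
  intro a
  apply le_antisymm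
  · apply le_of_forall_pos_le_add
    intro ε hε
    rw [zero_add]
    have hbb : BddBelow (Set.range fun z => extFun y f a + extFun y f z - dist a z) := by
      refine ⟨0, ?_⟩
      rintro r ⟨z, rfl⟩
      simp only
      linarith [ext_tri y hf a z]
    by_cases ha : a = y
    · obtain ⟨x', hx'⟩ := Sf_approx y (f := f) hε
      have h0 := ciInf_le hbb (x' : X)
      have e1 : extFun y f a = ⨆ x' : {x : X // x ≠ y}, (dist (x' : X) y - f x') := by
        rw [ha, extFun_apply_eq]
      have e2 := extFun_apply_ne y f x'
      have hd := dist_comm y (x' : X)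
      rw [ha] at h0 e1 ⊢
      linarith
    · obtain ⟨z, hz⟩ := ts_exists hf ⟨a, ha⟩ hε
      rw [Subtype.dist_eq] at hz
      have h0 := ciInf_le hbb (z : X)
      have e1 : extFun y f a = f ⟨a, ha⟩ := extFun_apply_ne y f ⟨a, ha⟩
      have e2 := extFun_apply_ne y f z
      simp only at h0 hz
      linarith
  · apply le_ciInf
    intro z
    linarith [ext_tri y hf a z]

-- uniqueness of the extension value at y
lemma unique_ext {f : {x : X // x ≠ y} → ℝ} (hf : f ∈ TightSpan {x : X // x ≠ y})
    {g : X → ℝ} (hg : g ∈ TightSpan X) (hagree : ∀ x' : {x : X // x ≠ y}, g (x' : X) = f x') :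
    g y = ⨆ x' : {x : X // x ≠ y}, (dist (x' : X) y - f x') := by
  have : Nonempty X := ⟨y⟩
  apply le_antisymm
  · apply le_of_forall_pos_le_add
    intro ε hε
    obtain ⟨z, hz⟩ := ts_exists hg y hε
    by_cases hzy : z = y
    · rw [hzy, dist_self] at hz
      have h1 := ts_nonneg hg y
      have h2 := Sf_nonneg y hf
      linarith
    · have h1 := Sf_le y hf ⟨z, hzy⟩
      rw [hagree ⟨z, hzy⟩] at hz
      have hd := dist_comm y z
      simp only at h1
      linarith
  · apply ciSup_le
    intro x'
    have h1 := hg.1 (x' : X) y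
    have h2 := hagree x'
    linarith


-- Part 2: isometry
lemma diff_bdd {f g : {x : X // x ≠ y} → ℝ} (hf : f ∈ TightSpan {x : X // x ≠ y})
    (hg : g ∈ TightSpan {x : X // x ≠ y}) :
    BddAbove (Set.range fun x' : {x : X // x ≠ y} => |f x' - g x'|) := by
  obtain ⟨x0⟩ := ‹Nonempty {x : X // x ≠ y}›
  refine ⟨f x0 + g x0, ?_⟩
  rintro r ⟨x', rfl⟩
  simp only
  rw [abs_le]
  constructor
  · have h1 := ts_lip hg x' x0
    have h2 := hf.1 x' x0
    linarith
  · have h1 := ts_lip hf x' x0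
    have h2 := hg.1 x' x0
    linarith

lemma diff_le {f g : {x : X // x ≠ y} → ℝ} (hf : f ∈ TightSpan {x : X // x ≠ y})
    (hg : g ∈ TightSpan {x : X // x ≠ y}) (x' : {x : X // x ≠ y}) :
    |f x' - g x'| ≤ ⨆ x' : {x : X // x ≠ y}, |f x' - g x'| :=
  le_ciSup (diff_bdd y hf hg) x'

lemma Sf_diff_le {f g : {x : X // x ≠ y} → ℝ} (hf : f ∈ TightSpan {x : X // x ≠ y})
    (hg : g ∈ TightSpan {x : X // x ≠ y}) :
    |(⨆ x' : {x : X // x ≠ y}, (dist (x' : X) y - f x')) -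
      ⨆ x' : {x : X // x ≠ y}, (dist (x' : X) y - g x')| ≤
      ⨆ x' : {x : X // x ≠ y}, |f x' - g x'| := by
  rw [abs_sub_le_iff]
  constructor
  · rw [sub_le_iff_le_add]
    apply ciSup_le
    intro x'
    have h1 := Sf_le y hg x'
    have h2 := diff_le y hf hg x'
    have h3 := neg_abs_le (f x' - g x')
    linarith
  · rw [sub_le_iff_le_add]
    apply ciSup_le
    intro x'
    have h1 := Sf_le y hf x'
    have h2 := diff_le y hf hg x'
    have h3 := le_abs_self (f x' - g x')
    linarith

lemma ext_diff_le {f g : {x : X // x ≠ y} → ℝ} (hf : f ∈ TightSpan {x : X // x ≠ y})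
    (hg : g ∈ TightSpan {x : X // x ≠ y}) (x : X) :
    |extFun y f x - extFun y g x| ≤ ⨆ x' : {x : X // x ≠ y}, |f x' - g x'| := by
  by_cases hx : x = y
  · rw [hx, extFun_apply_eq, extFun_apply_eq]
    exact Sf_diff_le y hf hg
  · rw [show extFun y f x = f ⟨x, hx⟩ from extFun_apply_ne y f ⟨x, hx⟩,
      show extFun y g x = g ⟨x, hx⟩ from extFun_apply_ne y g ⟨x, hx⟩]
    exact diff_le y hf hg ⟨x, hx⟩

lemma ext_iso {f g : {x : X // x ≠ y} → ℝ} (hf : f ∈ TightSpan {x : X // x ≠ y})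
    (hg : g ∈ TightSpan {x : X // x ≠ y}) :
    (⨆ x : X, |extFun y f x - extFun y g x|) = ⨆ x' : {x : X // x ≠ y}, |f x' - g x'| := by
  have hne : Nonempty X := ⟨y⟩
  apply le_antisymm
  · exact ciSup_le (ext_diff_le y hf hg)
  · apply ciSup_le
    intro x'
    rw [show f x' = extFun y f (x' : X) from (extFun_apply_ne y f x').symm,
      show g x' = extFun y g (x' : X) from (extFun_apply_ne y g x').symm]
    exact le_ciSup ⟨_, by rintro r ⟨x, rfl⟩; exact ext_diff_le y hf hg x⟩ (x' : X)

-- Part 3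
lemma ext_dist (x : {x : X // x ≠ y}) :
    extFun y (fun z : {x : X // x ≠ y} => dist (x : X) (z : X)) =
      fun z : X => dist (x : X) z := by
  funext z
  by_cases hz : z = y
  · rw [hz, extFun_apply_eq]
    apply le_antisymm
    · apply ciSup_le
      intro x'
      have h1 := dist_triangle (x' : X) (x : X) y
      have h2 := dist_comm (x : X) (x' : X)
      linarith
    · have hb : BddAbove (Set.range fun x' : {x : X // x ≠ y} =>
          dist (x' : X) y - dist (x : X) (x' : X)) := by
        refine ⟨dist (x : X) y, ?_⟩
        rintro r ⟨x', rfl⟩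
        simp only
        have h1 := dist_triangle (x' : X) (x : X) y
        have h2 := dist_comm (x : X) (x' : X)
        linarith
      have := le_ciSup hb x
      simp only [dist_self, sub_zero] at this
      exact this
  · exact extFun_apply_ne y (fun z : {x : X // x ≠ y} => dist (x : X) (z : X)) ⟨z, hz⟩

-- the restricted dist function lies in the tight span of Y
lemma dist_restr_mem (x : {x : X // x ≠ y}) :
    (fun z : {x : X // x ≠ y} => dist (x : X) (z : X)) ∈ TightSpan {x : X // x ≠ y} := by
  have h : (fun z : {x : X // x ≠ y} => dist (x : X) (z : X)) = fun z => dist x z := by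
    funext z
    rw [Subtype.dist_eq]
  rw [h]
  exact ts_dist_mem x

end ext

-- Part 4: uniqueness
lemma ext_unique {X : Type*} [MetricSpace X] (y : X) [Nonempty {x : X // x ≠ y}]
    (Ψ : ({x : X // x ≠ y} → ℝ) → (X → ℝ))
    (hmem : ∀ f ∈ TightSpan {x : X // x ≠ y}, Ψ f ∈ TightSpan X)
    (hiso : ∀ f ∈ TightSpan {x : X // x ≠ y}, ∀ g ∈ TightSpan {x : X // x ≠ y},
      (⨆ x : X, |Ψ f x - Ψ g x|) = ⨆ x' : {x : X // x ≠ y}, |f x' - g x'|)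
    (hdist : ∀ x : {x : X // x ≠ y},
      Ψ (fun z : {x : X // x ≠ y} => dist (x : X) (z : X)) = fun z : X => dist (x : X) z)
    (f : {x : X // x ≠ y} → ℝ) (hf : f ∈ TightSpan {x : X // x ≠ y}) :
    Ψ f = extFun y f := by
  have hne : Nonempty X := ⟨y⟩
  have hagree : ∀ x' : {x : X // x ≠ y}, Ψ f (x' : X) = f x' := by
    intro x'
    have key1 : (⨆ z : X, |Ψ f z - dist (x' : X) z|) = Ψ f (x' : X) :=
      ts_dist_sup (hmem f hf) (x' : X)
    have key2 := hiso f hf (fun z : {x : X // x ≠ y} => dist (x' : X) (z : X))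
      (dist_restr_mem y x')
    rw [hdist x'] at key2
    have key3 : (⨆ z : {x : X // x ≠ y}, |f z - dist (x' : X) (z : X)|) = f x' := by
      have he : (fun z : {x : X // x ≠ y} => |f z - dist (x' : X) (z : X)|) =
          fun z => |f z - dist x' z| := by
        funext z
        rw [Subtype.dist_eq]
      rw [he]
      exact ts_dist_sup hf x'
    rw [key3] at key2
    rw [← key1, ← key2]
  funext x
  by_cases hx : x = y
  · rw [hx, extFun_apply_eq]
    exact unique_ext y hf (hmem f hf) hagree
  · rw [show extFun y f x = f ⟨x, hx⟩ from extFun_apply_ne y f ⟨x, hx⟩]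
    exact hagree ⟨x, hx⟩


theorem stmt4 {X : Type*} [MetricSpace X] (y : X) [Nonempty {x : X // x ≠ y}] :
    -- Φ = extFun y maps T(Y) into T(X)
    (∀ f ∈ TightSpan {x : X // x ≠ y}, extFun y f ∈ TightSpan X) ∧
    -- Φ is an isometric embedding of T(Y) into T(X)
    (∀ f ∈ TightSpan {x : X // x ≠ y}, ∀ g ∈ TightSpan {x : X // x ≠ y},
      (⨆ x : X, |extFun y f x - extFun y g x|) =
        ⨆ x' : {x : X // x ≠ y}, |f x' - g x'|) ∧
    -- Φ maps each restricted distance function d(x,·)|_Y to d(x,·)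
    (∀ x : {x : X // x ≠ y},
      extFun y (fun z : {x : X // x ≠ y} => dist (x : X) (z : X)) =
        fun z : X => dist (x : X) z) ∧
    -- Φ is the unique such isometric embedding
    (∀ Ψ : ({x : X // x ≠ y} → ℝ) → (X → ℝ),
      (∀ f ∈ TightSpan {x : X // x ≠ y}, Ψ f ∈ TightSpan X) →
      (∀ f ∈ TightSpan {x : X // x ≠ y}, ∀ g ∈ TightSpan {x : X // x ≠ y},
        (⨆ x : X, |Ψ f x - Ψ g x|) = ⨆ x' : {x : X // x ≠ y}, |f x' - g x'|) →
      (∀ x : {x : X // x ≠ y},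
        Ψ (fun z : {x : X // x ≠ y} => dist (x : X) (z : X)) =
          fun z : X => dist (x : X) z) →
      ∀ f ∈ TightSpan {x : X // x ≠ y}, Ψ f = extFun y f) := by
  exact ⟨fun _ hf => ext_mem y hf,
    fun _ hf _ hg => ext_iso y hf hg,
    ext_dist y,
    fun Ψ hmem hiso hdist f hf => ext_unique y Ψ hmem hiso hdist f hf⟩
end

section
/- Let X be a nonempty subset of the L1 plane and let h ∈ ℝ² be a point surrounded by X. Then the function f_h : X → ℝ defined by f_h(x) = d₁(h,x) belongs to the tight span T(X) of X with the metric d₁ restricted to X. -/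
/-- The L1 distance on the plane ℝ². -/
def d1 (a b : ℝ × ℝ) : ℝ := |a.1 - b.1| + |a.2 - b.2|

/-- A point `h` of the plane is surrounded by a set `S` if each of the four closed
axis-aligned quadrants with corner at `h` contains a point of `S`. -/
def Surrounded (h : ℝ × ℝ) (S : Set (ℝ × ℝ)) : Prop :=
  (∃ x ∈ S, h.1 ≤ x.1 ∧ h.2 ≤ x.2) ∧
  (∃ x ∈ S, x.1 ≤ h.1 ∧ h.2 ≤ x.2) ∧
  (∃ x ∈ S, h.1 ≤ x.1 ∧ x.2 ≤ h.2) ∧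
  (∃ x ∈ S, x.1 ≤ h.1 ∧ x.2 ≤ h.2)

/-- The tight span of a set `Z` with distance function `d`: the set of functions
`f : Z → ℝ` with `f x + f y ≥ d(x,y)` for all `x, y` and
`inf_y (f x + f y - d(x,y)) = 0` for all `x`. -/
def TightSpanD {Z : Type*} (d : Z → Z → ℝ) : Set (Z → ℝ) :=
  {f | (∀ x y, d x y ≤ f x + f y) ∧ ∀ x, (⨅ y, (f x + f y - d x y)) = 0}

lemma d1_tri (h x y : ℝ × ℝ) : d1 x y ≤ d1 h x + d1 h y := by
  unfold d1
  have h1 : |x.1 - y.1| ≤ |x.1 - h.1| + |h.1 - y.1| := abs_sub_le _ _ _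
  have h2 : |x.2 - y.2| ≤ |x.2 - h.2| + |h.2 - y.2| := abs_sub_le _ _ _
  rw [abs_sub_comm x.1 h.1, abs_sub_comm x.2 h.2] at *
  linarith

lemma abs3 (h x y : ℝ) (hxy : x ≤ h ∧ h ≤ y ∨ y ≤ h ∧ h ≤ x) :
    |h - x| + |h - y| - |x - y| = 0 := by
  rcases abs_cases (h - x) with ⟨e1, s1⟩ | ⟨e1, s1⟩ <;>
  rcases abs_cases (h - y) with ⟨e2, s2⟩ | ⟨e2, s2⟩ <;>
  rcases abs_cases (x - y) with ⟨e3, s3⟩ | ⟨e3, s3⟩ <;>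
  rcases hxy with ⟨a, b⟩ | ⟨a, b⟩ <;> rw [e1, e2, e3] <;> linarith

lemma d1_quad (h x y : ℝ × ℝ)
    (h1 : x.1 ≤ h.1 ∧ h.1 ≤ y.1 ∨ y.1 ≤ h.1 ∧ h.1 ≤ x.1)
    (h2 : x.2 ≤ h.2 ∧ h.2 ≤ y.2 ∨ y.2 ≤ h.2 ∧ h.2 ≤ x.2) :
    d1 h x + d1 h y - d1 x y = 0 := by
  unfold d1
  have := abs3 h.1 x.1 y.1 h1
  have := abs3 h.2 x.2 y.2 h2
  linarith

theorem stmt6 (X : Set (ℝ × ℝ)) (hX : X.Nonempty) (h : ℝ × ℝ)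
    (hs : Surrounded h X) :
    (fun x : X => d1 h ↑x) ∈ TightSpanD (fun a b : X => d1 ↑a ↑b) := by
  have hne : Nonempty X := hX.to_subtype
  constructor
  · intro x y
    exact d1_tri h x y
  · intro x
    have hnn : ∀ y : X, (0:ℝ) ≤ d1 h ↑x + d1 h ↑y - d1 ↑x ↑y := by
      intro y; have := d1_tri h (x:ℝ×ℝ) (y:ℝ×ℝ); linarith
    obtain ⟨p, hpX, hp1, hp2⟩ := hs.1
    obtain ⟨q, hqX, hq1, hq2⟩ := hs.2.1
    obtain ⟨r, hrX, hr1, hr2⟩ := hs.2.2.1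
    obtain ⟨s, hsX, hs1, hs2⟩ := hs.2.2.2
    obtain ⟨y, hy⟩ : ∃ y : X, d1 h ↑x + d1 h ↑y - d1 ↑x ↑y = 0 := by
      rcases le_total (x:ℝ×ℝ).1 h.1 with c1 | c1 <;>
      rcases le_total (x:ℝ×ℝ).2 h.2 with c2 | c2
      · exact ⟨⟨p, hpX⟩, d1_quad h _ _ (Or.inl ⟨c1, hp1⟩) (Or.inl ⟨c2, hp2⟩)⟩
      · exact ⟨⟨r, hrX⟩, d1_quad h _ _ (Or.inl ⟨c1, hr1⟩) (Or.inr ⟨hr2, c2⟩)⟩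
      · exact ⟨⟨q, hqX⟩, d1_quad h _ _ (Or.inr ⟨hq1, c1⟩) (Or.inl ⟨c2, hq2⟩)⟩
      · exact ⟨⟨s, hsX⟩, d1_quad h _ _ (Or.inr ⟨hs1, c1⟩) (Or.inr ⟨hs2, c2⟩)⟩
    apply le_antisymm
    · calc (⨅ y : X, (d1 h ↑x + d1 h ↑y - d1 ↑x ↑y)) ≤ _ :=
        ciInf_le ⟨0, fun v ⟨z, hz⟩ => hz ▸ hnn z⟩ y
      _ = 0 := hy
    · exact le_ciInf hnn
end

section
/- Let X be a nonempty compact subset of the L1 plane, and let H be the orthogonal convex hull of X, i.e. the set of all points of ℝ² surrounded by X. If H is connected (as a subspace of ℝ²), then the map h ↦ f_h, where f_h(x) = d₁(h,x), is a bijection from H onto the tight span T(X), and it is an isometry: d₁(h,h') = d_T(f_h, f_{h'}) for all h, h' ∈ H. -/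
theorem d1_comm (a b : ℝ × ℝ) : d1 a b = d1 b a := by
  unfold d1; rw [abs_sub_comm, abs_sub_comm a.2]

theorem d1_nonneg (a b : ℝ × ℝ) : 0 ≤ d1 a b :=
  add_nonneg (abs_nonneg _) (abs_nonneg _)

theorem d1_tri_s7 (a b c : ℝ × ℝ) : d1 a c ≤ d1 a b + d1 b c := by
  unfold d1
  have h1 := abs_sub_le a.1 b.1 c.1
  have h2 := abs_sub_le a.2 b.2 c.2
  linarith

theorem d1_max (a b : ℝ × ℝ) :
    d1 a b = max |(a.1 + a.2) - (b.1 + b.2)| |(a.1 - a.2) - (b.1 - b.2)| := by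
  unfold d1
  set p := a.1 - b.1 with hp'
  set q := a.2 - b.2 with hq'
  have e1 : (a.1 + a.2) - (b.1 + b.2) = p + q := by rw [hp', hq']; ring
  have e2 : (a.1 - a.2) - (b.1 - b.2) = p - q := by rw [hp', hq']; ring
  rw [e1, e2]
  rcases le_total 0 p with hp | hp <;> rcases le_total 0 q with hq | hq
  · rw [abs_of_nonneg hp, abs_of_nonneg hq, abs_of_nonneg (by linarith : (0:ℝ) ≤ p + q),
      max_eq_left (abs_le.mpr ⟨by linarith, by linarith⟩)]
  · rw [abs_of_nonneg hp, abs_of_nonpos hq, abs_of_nonneg (by linarith : (0:ℝ) ≤ p - q),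
      max_eq_right (abs_le.mpr ⟨by linarith, by linarith⟩)]
    ring
  · rw [abs_of_nonpos hp, abs_of_nonneg hq, abs_of_nonpos (by linarith : p - q ≤ 0),
      max_eq_right (abs_le.mpr ⟨by linarith, by linarith⟩)]
    ring
  · rw [abs_of_nonpos hp, abs_of_nonpos hq, abs_of_nonpos (by linarith : p + q ≤ 0),
      max_eq_left (abs_le.mpr ⟨by linarith, by linarith⟩)]
    ring

theorem between_le {a b c : ℝ} (hE : |a - c| = |a - b| + |b - c|) (h : b < a) : c ≤ b := by
  by_contra hc; push_neg at hc
  rcases abs_cases (a - c) with ⟨he, _⟩ | ⟨he, _⟩ <;>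
    rw [he, abs_of_pos (by linarith : (0:ℝ) < a - b), abs_of_neg (by linarith : b - c < 0)] at hE <;>
    linarith

theorem between_ge {a b c : ℝ} (hE : |a - c| = |a - b| + |b - c|) (h : a < b) : b ≤ c := by
  by_contra hc; push_neg at hc
  rcases abs_cases (a - c) with ⟨he, _⟩ | ⟨he, _⟩ <;>
    rw [he, abs_of_neg (by linarith : a - b < 0), abs_of_pos (by linarith : (0:ℝ) < b - c)] at hE <;>
    linarith

theorem surrounded_self {x : ℝ × ℝ} {X : Set (ℝ × ℝ)} (hx : x ∈ X) : Surrounded x X :=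
  ⟨⟨x, hx, le_rfl, le_rfl⟩, ⟨x, hx, le_rfl, le_rfl⟩, ⟨x, hx, le_rfl, le_rfl⟩,
   ⟨x, hx, le_rfl, le_rfl⟩⟩

theorem sep13 (X H : Set (ℝ × ℝ)) (hH : H = {h | Surrounded h X}) (hconn : IsConnected H)
    (c : ℝ × ℝ)
    (hQ1 : ∀ x ∈ X, ¬(c.1 ≤ x.1 ∧ c.2 ≤ x.2))
    (hQ3 : ∀ x ∈ X, ¬(x.1 ≤ c.1 ∧ x.2 ≤ c.2))
    (a : ℝ × ℝ) (ha : a ∈ X) (ha4 : c.1 < a.1 ∧ a.2 < c.2)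
    (b : ℝ × ℝ) (hb : b ∈ X) (hb2 : b.1 < c.1 ∧ c.2 < b.2) : False := by
  set U : Set (ℝ × ℝ) := {g | c.1 < g.1 ∧ g.2 < c.2} with hUdef
  set V : Set (ℝ × ℝ) := {g | g.1 < c.1 ∧ c.2 < g.2} with hVdef
  have hU : IsOpen U :=
    (isOpen_lt continuous_const continuous_fst).inter (isOpen_lt continuous_snd continuous_const)
  have hV : IsOpen V :=
    (isOpen_lt continuous_fst continuous_const).inter (isOpen_lt continuous_const continuous_snd)
  have hXH : X ⊆ H := fun x hx => hH ▸ surrounded_self hx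
  have hcover : H ⊆ U ∪ V := by
    intro g hg
    rw [hH] at hg
    have n1 : ¬(c.1 ≤ g.1 ∧ c.2 ≤ g.2) := by
      rintro ⟨u1, u2⟩
      obtain ⟨x, hx, hx1, hx2⟩ := hg.1
      exact hQ1 x hx ⟨u1.trans hx1, u2.trans hx2⟩
    have n3 : ¬(g.1 ≤ c.1 ∧ g.2 ≤ c.2) := by
      rintro ⟨u1, u2⟩
      obtain ⟨x, hx, hx1, hx2⟩ := hg.2.2.2
      exact hQ3 x hx ⟨hx1.trans u1, hx2.trans u2⟩
    rcases lt_or_ge g.1 c.1 with hg1 | hg1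
    · right
      refine ⟨hg1, ?_⟩
      by_contra hc; push_neg at hc
      exact n3 ⟨hg1.le, hc⟩
    · have hg2 : g.2 < c.2 := by
        by_contra hc; push_neg at hc
        exact n1 ⟨hg1, hc⟩
      exact Or.inl ⟨lt_of_le_of_ne hg1 (fun he => n3 ⟨he.ge, hg2.le⟩), hg2⟩
  obtain ⟨g, -, ⟨hg1, -⟩, ⟨hg2, -⟩⟩ :=
    hconn.isPreconnected U V hU hV hcover ⟨a, hXH ha, ha4⟩ ⟨b, hXH hb, hb2⟩
  linarith

theorem sep24 (X H : Set (ℝ × ℝ)) (hH : H = {h | Surrounded h X}) (hconn : IsConnected H)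
    (c : ℝ × ℝ)
    (hQ2 : ∀ x ∈ X, ¬(x.1 ≤ c.1 ∧ c.2 ≤ x.2))
    (hQ4 : ∀ x ∈ X, ¬(c.1 ≤ x.1 ∧ x.2 ≤ c.2))
    (a : ℝ × ℝ) (ha : a ∈ X) (ha1 : c.1 < a.1 ∧ c.2 < a.2)
    (b : ℝ × ℝ) (hb : b ∈ X) (hb3 : b.1 < c.1 ∧ b.2 < c.2) : False := by
  set U : Set (ℝ × ℝ) := {g | c.1 < g.1 ∧ c.2 < g.2} with hUdef
  set V : Set (ℝ × ℝ) := {g | g.1 < c.1 ∧ g.2 < c.2} with hVdef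
  have hU : IsOpen U :=
    (isOpen_lt continuous_const continuous_fst).inter (isOpen_lt continuous_const continuous_snd)
  have hV : IsOpen V :=
    (isOpen_lt continuous_fst continuous_const).inter (isOpen_lt continuous_snd continuous_const)
  have hXH : X ⊆ H := fun x hx => hH ▸ surrounded_self hx
  have hcover : H ⊆ U ∪ V := by
    intro g hg
    rw [hH] at hg
    have n2 : ¬(g.1 ≤ c.1 ∧ c.2 ≤ g.2) := by
      rintro ⟨u1, u2⟩
      obtain ⟨x, hx, hx1, hx2⟩ := hg.2.1
      exact hQ2 x hx ⟨hx1.trans u1, u2.trans hx2⟩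
    have n4 : ¬(c.1 ≤ g.1 ∧ g.2 ≤ c.2) := by
      rintro ⟨u1, u2⟩
      obtain ⟨x, hx, hx1, hx2⟩ := hg.2.2.1
      exact hQ4 x hx ⟨u1.trans hx1, hx2.trans u2⟩
    rcases lt_or_ge g.1 c.1 with hg1 | hg1
    · right
      refine ⟨hg1, ?_⟩
      by_contra hc; push_neg at hc
      exact n2 ⟨hg1.le, hc⟩
    · have hg2 : c.2 < g.2 := by
        by_contra hc; push_neg at hc
        exact n4 ⟨hg1, hc⟩
      exact Or.inl ⟨lt_of_le_of_ne hg1 (fun he => n2 ⟨he.ge, hg2.le⟩), hg2⟩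
  obtain ⟨g, -, ⟨hg1, -⟩, ⟨hg2, -⟩⟩ :=
    hconn.isPreconnected U V hU hV hcover ⟨a, hXH ha, ha1⟩ ⟨b, hXH hb, hb3⟩
  linarith

theorem stmt7 (X : Set (ℝ × ℝ)) (hne : X.Nonempty) (hcomp : IsCompact X)
    (H : Set (ℝ × ℝ)) (hH : H = {h | Surrounded h X}) (hconn : IsConnected H) :
    Set.BijOn (fun h => fun x : X => d1 h ↑x) H (TightSpanD fun a b : X => d1 ↑a ↑b) ∧
    ∀ h ∈ H, ∀ h' ∈ H, d1 h h' = ⨆ x : X, |d1 h ↑x - d1 h' ↑x| := by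
  haveI hXne : Nonempty ↥X := hne.to_subtype
  haveI : CompactSpace ↥X := isCompact_iff_compactSpace.mp hcomp
  -- Part 2: the isometry formula (only needs h' surrounded)
  have part2 : ∀ h ∈ H, ∀ h' ∈ H, d1 h h' = ⨆ x : X, |d1 h ↑x - d1 h' ↑x| := by
    intro h _ h' hh'
    rw [hH] at hh'
    have hrev : ∀ x : X, |d1 h ↑x - d1 h' ↑x| ≤ d1 h h' := by
      intro x
      have t1 := d1_tri_s7 h h' ↑x
      have t2 := d1_tri_s7 h' h ↑x
      have t3 := d1_comm h' h
      exact abs_le.mpr ⟨by linarith, by linarith⟩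
    have hbdd : BddAbove (Set.range fun x : X => |d1 h ↑x - d1 h' ↑x|) :=
      ⟨d1 h h', by rintro t ⟨x, rfl⟩; exact hrev x⟩
    refine le_antisymm ?_ (ciSup_le hrev)
    have hwit : ∃ x : X, d1 h ↑x - d1 h' ↑x = d1 h h' := by
      rcases le_total h.1 h'.1 with h1 | h1 <;> rcases le_total h.2 h'.2 with h2 | h2
      · obtain ⟨x, hx, hx1, hx2⟩ := hh'.1
        refine ⟨⟨x, hx⟩, ?_⟩
        show d1 h x - d1 h' x = d1 h h'
        unfold d1
        rw [abs_of_nonpos (by linarith : h.1 - x.1 ≤ 0),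
          abs_of_nonpos (by linarith : h.2 - x.2 ≤ 0),
          abs_of_nonpos (by linarith : h'.1 - x.1 ≤ 0),
          abs_of_nonpos (by linarith : h'.2 - x.2 ≤ 0),
          abs_of_nonpos (by linarith : h.1 - h'.1 ≤ 0),
          abs_of_nonpos (by linarith : h.2 - h'.2 ≤ 0)]
        ring
      · obtain ⟨x, hx, hx1, hx2⟩ := hh'.2.2.1
        refine ⟨⟨x, hx⟩, ?_⟩
        show d1 h x - d1 h' x = d1 h h'
        unfold d1
        rw [abs_of_nonpos (by linarith : h.1 - x.1 ≤ 0),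
          abs_of_nonneg (by linarith : 0 ≤ h.2 - x.2),
          abs_of_nonpos (by linarith : h'.1 - x.1 ≤ 0),
          abs_of_nonneg (by linarith : 0 ≤ h'.2 - x.2),
          abs_of_nonpos (by linarith : h.1 - h'.1 ≤ 0),
          abs_of_nonneg (by linarith : 0 ≤ h.2 - h'.2)]
        ring
      · obtain ⟨x, hx, hx1, hx2⟩ := hh'.2.1
        refine ⟨⟨x, hx⟩, ?_⟩
        show d1 h x - d1 h' x = d1 h h'
        unfold d1
        rw [abs_of_nonneg (by linarith : 0 ≤ h.1 - x.1),
          abs_of_nonpos (by linarith : h.2 - x.2 ≤ 0),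
          abs_of_nonneg (by linarith : 0 ≤ h'.1 - x.1),
          abs_of_nonpos (by linarith : h'.2 - x.2 ≤ 0),
          abs_of_nonneg (by linarith : 0 ≤ h.1 - h'.1),
          abs_of_nonpos (by linarith : h.2 - h'.2 ≤ 0)]
        ring
      · obtain ⟨x, hx, hx1, hx2⟩ := hh'.2.2.2
        refine ⟨⟨x, hx⟩, ?_⟩
        show d1 h x - d1 h' x = d1 h h'
        unfold d1
        rw [abs_of_nonneg (by linarith : 0 ≤ h.1 - x.1),
          abs_of_nonneg (by linarith : 0 ≤ h.2 - x.2),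
          abs_of_nonneg (by linarith : 0 ≤ h'.1 - x.1),
          abs_of_nonneg (by linarith : 0 ≤ h'.2 - x.2),
          abs_of_nonneg (by linarith : 0 ≤ h.1 - h'.1),
          abs_of_nonneg (by linarith : 0 ≤ h.2 - h'.2)]
        ring
    obtain ⟨x, hx⟩ := hwit
    have hle : |d1 h ↑x - d1 h' ↑x| ≤ ⨆ x : X, |d1 h ↑x - d1 h' ↑x| := le_ciSup hbdd x
    rw [hx, abs_of_nonneg (d1_nonneg h h')] at hle
    exact hle
  -- MapsTo
  have mapsTo : ∀ h ∈ H, (fun x : X => d1 h ↑x) ∈ TightSpanD fun a b : X => d1 ↑a ↑b := by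
    intro h hh
    rw [hH] at hh
    refine ⟨fun x y => ?_, fun x => ?_⟩
    · show d1 ↑x ↑y ≤ d1 h ↑x + d1 h ↑y
      have := d1_tri_s7 ↑x h ↑y
      have := d1_comm (↑x : ℝ × ℝ) h
      linarith
    · show (⨅ y : X, (d1 h ↑x + d1 h ↑y - d1 ↑x ↑y)) = 0
      have hlb : ∀ z : X, 0 ≤ d1 h ↑x + d1 h ↑z - d1 ↑x ↑z := by
        intro z
        have := d1_tri_s7 ↑x h ↑z
        have := d1_comm (↑x : ℝ × ℝ) h
        linarith
      have hwit : ∃ y : X, d1 h ↑x + d1 h ↑y - d1 ↑x ↑y = 0 := by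
        rcases le_total h.1 (↑x : ℝ × ℝ).1 with h1 | h1 <;>
          rcases le_total h.2 (↑x : ℝ × ℝ).2 with h2 | h2
        · obtain ⟨y, hy, hy1, hy2⟩ := hh.2.2.2
          refine ⟨⟨y, hy⟩, ?_⟩
          show d1 h ↑x + d1 h y - d1 ↑x y = 0
          unfold d1
          rw [abs_of_nonpos (by linarith : h.1 - (↑x : ℝ × ℝ).1 ≤ 0),
            abs_of_nonpos (by linarith : h.2 - (↑x : ℝ × ℝ).2 ≤ 0),
            abs_of_nonneg (by linarith : 0 ≤ h.1 - y.1),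
            abs_of_nonneg (by linarith : 0 ≤ h.2 - y.2),
            abs_of_nonneg (by linarith : 0 ≤ (↑x : ℝ × ℝ).1 - y.1),
            abs_of_nonneg (by linarith : 0 ≤ (↑x : ℝ × ℝ).2 - y.2)]
          ring
        · obtain ⟨y, hy, hy1, hy2⟩ := hh.2.1
          refine ⟨⟨y, hy⟩, ?_⟩
          show d1 h ↑x + d1 h y - d1 ↑x y = 0
          unfold d1
          rw [abs_of_nonpos (by linarith : h.1 - (↑x : ℝ × ℝ).1 ≤ 0),
            abs_of_nonneg (by linarith : 0 ≤ h.2 - (↑x : ℝ × ℝ).2),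
            abs_of_nonneg (by linarith : 0 ≤ h.1 - y.1),
            abs_of_nonpos (by linarith : h.2 - y.2 ≤ 0),
            abs_of_nonneg (by linarith : 0 ≤ (↑x : ℝ × ℝ).1 - y.1),
            abs_of_nonpos (by linarith : (↑x : ℝ × ℝ).2 - y.2 ≤ 0)]
          ring
        · obtain ⟨y, hy, hy1, hy2⟩ := hh.2.2.1
          refine ⟨⟨y, hy⟩, ?_⟩
          show d1 h ↑x + d1 h y - d1 ↑x y = 0
          unfold d1
          rw [abs_of_nonneg (by linarith : 0 ≤ h.1 - (↑x : ℝ × ℝ).1),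
            abs_of_nonpos (by linarith : h.2 - (↑x : ℝ × ℝ).2 ≤ 0),
            abs_of_nonpos (by linarith : h.1 - y.1 ≤ 0),
            abs_of_nonneg (by linarith : 0 ≤ h.2 - y.2),
            abs_of_nonpos (by linarith : (↑x : ℝ × ℝ).1 - y.1 ≤ 0),
            abs_of_nonneg (by linarith : 0 ≤ (↑x : ℝ × ℝ).2 - y.2)]
          ring
        · obtain ⟨y, hy, hy1, hy2⟩ := hh.1
          refine ⟨⟨y, hy⟩, ?_⟩
          show d1 h ↑x + d1 h y - d1 ↑x y = 0
          unfold d1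
          rw [abs_of_nonneg (by linarith : 0 ≤ h.1 - (↑x : ℝ × ℝ).1),
            abs_of_nonneg (by linarith : 0 ≤ h.2 - (↑x : ℝ × ℝ).2),
            abs_of_nonpos (by linarith : h.1 - y.1 ≤ 0),
            abs_of_nonpos (by linarith : h.2 - y.2 ≤ 0),
            abs_of_nonpos (by linarith : (↑x : ℝ × ℝ).1 - y.1 ≤ 0),
            abs_of_nonpos (by linarith : (↑x : ℝ × ℝ).2 - y.2 ≤ 0)]
          ring
      obtain ⟨y, hy⟩ := hwit
      refine le_antisymm ?_ (le_ciInf hlb)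
      have := ciInf_le (f := fun y : X => d1 h ↑x + d1 h ↑y - d1 ↑x ↑y)
        ⟨0, by rintro t ⟨z, rfl⟩; exact hlb z⟩ y
      rw [hy] at this
      exact this
  -- Injectivity
  have injOn : Set.InjOn (fun h => fun x : X => d1 h ↑x) H := by
    intro h hh h' hh' heq
    have e := part2 h hh h' hh'
    have e2 : (fun x : X => |d1 h ↑x - d1 h' ↑x|) = fun _ : X => (0 : ℝ) := by
      funext x
      rw [show d1 h ↑x = d1 h' ↑x from congrFun heq x, sub_self, abs_zero]
    rw [show (⨆ x : X, |d1 h ↑x - d1 h' ↑x|) = ⨆ _ : X, (0:ℝ) from by rw [e2], ciSup_const] at e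
    have a1 := abs_nonneg (h.1 - h'.1)
    have a2 := abs_nonneg (h.2 - h'.2)
    unfold d1 at e
    have e1 : h.1 = h'.1 := by
      have : |h.1 - h'.1| = 0 := by linarith
      have := abs_eq_zero.mp this
      linarith
    have e2' : h.2 = h'.2 := by
      have : |h.2 - h'.2| = 0 := by linarith
      have := abs_eq_zero.mp this
      linarith
    exact Prod.ext e1 e2'
  have surjOn : Set.SurjOn (fun h => fun x : X => d1 h ↑x) H
      (TightSpanD fun a b : X => d1 ↑a ↑b) := by
    intro f hf
    obtain ⟨htri0, hext0⟩ := hf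
    have htri : ∀ x y : X, d1 ↑x ↑y ≤ f x + f y := htri0
    have hext : ∀ x : X, (⨅ y : X, (f x + f y - d1 ↑x ↑y)) = 0 := hext0
    -- f is Lipschitz and continuous
    have hLip : ∀ x y : X, f x ≤ f y + d1 ↑x ↑y := by
      intro x y
      refine le_of_forall_pos_le_add fun ε hε => ?_
      obtain ⟨z, hz⟩ := exists_lt_of_ciInf_lt
        (show (⨅ z : X, (f x + f z - d1 ↑x ↑z)) < ε by rw [hext x]; exact hε)
      have t1 := d1_tri_s7 ↑x ↑y ↑z
      have t2 := htri y z
      linarith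
    have hcont : Continuous f := by
      rw [Metric.continuous_iff]
      intro b ε hε
      refine ⟨ε / 4, by linarith, fun a hab => ?_⟩
      have h1 : |f a - f b| ≤ d1 ↑a ↑b := by
        have l1 := hLip a b
        have l2 := hLip b a
        have l3 := d1_comm (↑a : ℝ × ℝ) ↑b
        exact abs_le.mpr ⟨by linarith, by linarith⟩
      have h2 : d1 ↑a ↑b ≤ 2 * dist a b := by
        have md : dist a b = |(↑a : ℝ × ℝ).1 - (↑b : ℝ × ℝ).1| ⊔ |(↑a : ℝ × ℝ).2 - (↑b : ℝ × ℝ).2| := by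
          rw [Subtype.dist_eq, Prod.dist_eq, Real.dist_eq, Real.dist_eq]
        have m1 : |(↑a : ℝ × ℝ).1 - (↑b : ℝ × ℝ).1| ≤ dist a b := md ▸ le_max_left _ _
        have m2 : |(↑a : ℝ × ℝ).2 - (↑b : ℝ × ℝ).2| ≤ dist a b := md ▸ le_max_right _ _
        unfold d1
        linarith
      rw [Real.dist_eq]
      calc |f a - f b| ≤ d1 ↑a ↑b := h1
        _ ≤ 2 * dist a b := h2
        _ < ε := by linarith
    -- extrema of the four linear functionals
    obtain ⟨xA, hxA⟩ : ∃ xA : X, ∀ y : X, (↑y : ℝ × ℝ).1 + (↑y : ℝ × ℝ).2 - f y ≤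
        (↑xA : ℝ × ℝ).1 + (↑xA : ℝ × ℝ).2 - f xA := by
      obtain ⟨x, -, hx⟩ := isCompact_univ.exists_isMaxOn Set.univ_nonempty
        (((((continuous_fst.comp continuous_subtype_val)).add
          ((continuous_snd.comp continuous_subtype_val))).sub hcont).continuousOn)
      exact ⟨x, fun y => hx (Set.mem_univ y)⟩
    obtain ⟨xB, hxB⟩ : ∃ xB : X, ∀ y : X, (↑xB : ℝ × ℝ).1 + (↑xB : ℝ × ℝ).2 + f xB ≤
        (↑y : ℝ × ℝ).1 + (↑y : ℝ × ℝ).2 + f y := by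
      obtain ⟨x, -, hx⟩ := isCompact_univ.exists_isMinOn Set.univ_nonempty
        (((((continuous_fst.comp continuous_subtype_val)).add
          ((continuous_snd.comp continuous_subtype_val))).add hcont).continuousOn)
      exact ⟨x, fun y => hx (Set.mem_univ y)⟩
    obtain ⟨xC, hxC⟩ : ∃ xC : X, ∀ y : X, (↑y : ℝ × ℝ).1 - (↑y : ℝ × ℝ).2 - f y ≤
        (↑xC : ℝ × ℝ).1 - (↑xC : ℝ × ℝ).2 - f xC := by
      obtain ⟨x, -, hx⟩ := isCompact_univ.exists_isMaxOn Set.univ_nonempty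
        (((((continuous_fst.comp continuous_subtype_val)).sub
          ((continuous_snd.comp continuous_subtype_val))).sub hcont).continuousOn)
      exact ⟨x, fun y => hx (Set.mem_univ y)⟩
    obtain ⟨xD, hxD⟩ : ∃ xD : X, ∀ y : X, (↑xD : ℝ × ℝ).1 - (↑xD : ℝ × ℝ).2 + f xD ≤
        (↑y : ℝ × ℝ).1 - (↑y : ℝ × ℝ).2 + f y := by
      obtain ⟨x, -, hx⟩ := isCompact_univ.exists_isMinOn Set.univ_nonempty
        (((((continuous_fst.comp continuous_subtype_val)).sub
          ((continuous_snd.comp continuous_subtype_val))).add hcont).continuousOn)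
      exact ⟨x, fun y => hx (Set.mem_univ y)⟩
    set A : ℝ := (↑xA : ℝ × ℝ).1 + (↑xA : ℝ × ℝ).2 - f xA with hAdef
    set B : ℝ := (↑xB : ℝ × ℝ).1 + (↑xB : ℝ × ℝ).2 + f xB with hBdef
    set C : ℝ := (↑xC : ℝ × ℝ).1 - (↑xC : ℝ × ℝ).2 - f xC with hCdef
    set D : ℝ := (↑xD : ℝ × ℝ).1 - (↑xD : ℝ × ℝ).2 + f xD with hDdef
    clear_value A B C D
    have habs_u : ∀ x y : X, |((↑x : ℝ × ℝ).1 + (↑x : ℝ × ℝ).2) -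
        ((↑y : ℝ × ℝ).1 + (↑y : ℝ × ℝ).2)| ≤ f x + f y := by
      intro x y
      refine le_trans ?_ (htri x y)
      rw [d1_max]
      exact le_max_left _ _
    have habs_v : ∀ x y : X, |((↑x : ℝ × ℝ).1 - (↑x : ℝ × ℝ).2) -
        ((↑y : ℝ × ℝ).1 - (↑y : ℝ × ℝ).2)| ≤ f x + f y := by
      intro x y
      refine le_trans ?_ (htri x y)
      rw [d1_max]
      exact le_max_right _ _
    have hAB : A ≤ B := by
      have h := habs_u xA xB
      have h2 := le_abs_self (((↑xA : ℝ × ℝ).1 + (↑xA : ℝ × ℝ).2) -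
        ((↑xB : ℝ × ℝ).1 + (↑xB : ℝ × ℝ).2))
      rw [hAdef, hBdef]; linarith
    have hCD : C ≤ D := by
      have h := habs_v xC xD
      have h2 := le_abs_self (((↑xC : ℝ × ℝ).1 - (↑xC : ℝ × ℝ).2) -
        ((↑xD : ℝ × ℝ).1 - (↑xD : ℝ × ℝ).2))
      rw [hCdef, hDdef]; linarith
    -- membership in the intersection of balls
    have hKmem : ∀ p : ℝ × ℝ, A ≤ p.1 + p.2 → p.1 + p.2 ≤ B → C ≤ p.1 - p.2 → p.1 - p.2 ≤ D →
        ∀ x : X, d1 p ↑x ≤ f x := by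
      intro p h1 h2 h3 h4 x
      have bA : (↑x : ℝ × ℝ).1 + (↑x : ℝ × ℝ).2 - f x ≤ A := hxA x
      have bB : B ≤ (↑x : ℝ × ℝ).1 + (↑x : ℝ × ℝ).2 + f x := hxB x
      have bC : (↑x : ℝ × ℝ).1 - (↑x : ℝ × ℝ).2 - f x ≤ C := hxC x
      have bD : D ≤ (↑x : ℝ × ℝ).1 - (↑x : ℝ × ℝ).2 + f x := hxD x
      rw [d1_max]
      exact max_le (abs_le.mpr ⟨by linarith, by linarith⟩)
        (abs_le.mpr ⟨by linarith, by linarith⟩)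
    -- any point of K realizes f
    have hF2 : ∀ p : ℝ × ℝ, (∀ x : X, d1 p ↑x ≤ f x) → ∀ x : X, f x = d1 p ↑x := by
      intro p hp x
      refine le_antisymm ?_ (hp x)
      have h0 : f x - d1 p ↑x ≤ 0 := by
        rw [← hext x]
        refine le_ciInf fun y => ?_
        have t := d1_tri_s7 ↑x p ↑y
        have t2 := d1_comm p (↑x : ℝ × ℝ)
        have := hp y
        linarith
      linarith
    -- opposite point
    have hF3 : ∀ p : ℝ × ℝ, (∀ x : X, d1 p ↑x ≤ f x) → ∀ x : X,
        ∃ y : X, d1 ↑x ↑y = d1 p ↑x + d1 p ↑y := by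
      intro p hp x
      have hcg : Continuous fun y : X => f x + f y - d1 ↑x ↑y := by
        unfold d1
        exact (continuous_const.add hcont).sub
          (((continuous_const.sub (continuous_fst.comp continuous_subtype_val)).abs).add
            ((continuous_const.sub (continuous_snd.comp continuous_subtype_val)).abs))
      obtain ⟨y0, hy0⟩ : ∃ y0 : X, ∀ y : X, f x + f y0 - d1 ↑x ↑y0 ≤ f x + f y - d1 ↑x ↑y := by
        obtain ⟨y0, -, hy0⟩ := isCompact_univ.exists_isMinOn Set.univ_nonempty hcg.continuousOn
        exact ⟨y0, fun y => hy0 (Set.mem_univ y)⟩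
      have h1 : f x + f y0 - d1 ↑x ↑y0 = 0 := by
        refine le_antisymm ?_ (by have := htri x y0; linarith)
        rw [← hext x]
        exact le_ciInf hy0
      have e1 := hF2 p hp x
      have e2 := hF2 p hp y0
      exact ⟨y0, by linarith⟩
    -- coordinatewise betweenness from the opposite point
    have hbtw : ∀ (p : ℝ × ℝ) (x y : X), d1 ↑x ↑y = d1 p ↑x + d1 p ↑y →
        (|(↑x : ℝ × ℝ).1 - (↑y : ℝ × ℝ).1| = |(↑x : ℝ × ℝ).1 - p.1| + |p.1 - (↑y : ℝ × ℝ).1|) ∧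
        (|(↑x : ℝ × ℝ).2 - (↑y : ℝ × ℝ).2| = |(↑x : ℝ × ℝ).2 - p.2| + |p.2 - (↑y : ℝ × ℝ).2|) := by
      intro p x y he
      have t1 := abs_sub_le (↑x : ℝ × ℝ).1 p.1 (↑y : ℝ × ℝ).1
      have t2 := abs_sub_le (↑x : ℝ × ℝ).2 p.2 (↑y : ℝ × ℝ).2
      unfold d1 at he
      have s1 : |p.1 - (↑x : ℝ × ℝ).1| = |(↑x : ℝ × ℝ).1 - p.1| := abs_sub_comm _ _
      have s2 : |p.2 - (↑x : ℝ × ℝ).2| = |(↑x : ℝ × ℝ).2 - p.2| := abs_sub_comm _ _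
      constructor <;> linarith
    -- A = B
    have hAeqB : A = B := by
      by_contra hne'
      have hlt : A < B := lt_of_le_of_ne hAB hne'
      obtain ⟨p, hp1, hp2⟩ : ∃ p : ℝ × ℝ, p.1 = ((A + B) / 2 + C) / 2 ∧
          p.2 = ((A + B) / 2 - C) / 2 :=
        ⟨(((A + B) / 2 + C) / 2, ((A + B) / 2 - C) / 2), rfl, rfl⟩
      have hpu : p.1 + p.2 = (A + B) / 2 := by rw [hp1, hp2]; ring
      have hpv : p.1 - p.2 = C := by rw [hp1, hp2]; ring
      have hpK : ∀ x : X, d1 p ↑x ≤ f x :=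
        hKmem p (by linarith) (by linarith) (by linarith) (by linarith)
      have hQ1 : ∀ z ∈ X, ¬(p.1 ≤ z.1 ∧ p.2 ≤ z.2) := by
        rintro z hz ⟨hz1, hz2⟩
        have e : f ⟨z, hz⟩ = d1 p z := hF2 p hpK ⟨z, hz⟩
        have ed : d1 p z = (z.1 - p.1) + (z.2 - p.2) := by
          unfold d1
          rw [abs_of_nonpos (by linarith : p.1 - z.1 ≤ 0),
            abs_of_nonpos (by linarith : p.2 - z.2 ≤ 0)]
          ring
        have bA : z.1 + z.2 - f ⟨z, hz⟩ ≤ A := hxA ⟨z, hz⟩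
        linarith
      have hQ3 : ∀ z ∈ X, ¬(z.1 ≤ p.1 ∧ z.2 ≤ p.2) := by
        rintro z hz ⟨hz1, hz2⟩
        have e : f ⟨z, hz⟩ = d1 p z := hF2 p hpK ⟨z, hz⟩
        have ed : d1 p z = (p.1 - z.1) + (p.2 - z.2) := by
          unfold d1
          rw [abs_of_nonneg (by linarith : 0 ≤ p.1 - z.1),
            abs_of_nonneg (by linarith : 0 ≤ p.2 - z.2)]
        have bB : B ≤ z.1 + z.2 + f ⟨z, hz⟩ := hxB ⟨z, hz⟩
        linarith
      obtain ⟨x0, hx0⟩ := hne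
      have hx0pos : (p.1 < x0.1 ∧ x0.2 < p.2) ∨ (x0.1 < p.1 ∧ p.2 < x0.2) := by
        rcases lt_or_ge x0.1 p.1 with hc | hc
        · right
          refine ⟨hc, ?_⟩
          by_contra hcc; push_neg at hcc
          exact hQ3 x0 hx0 ⟨hc.le, hcc⟩
        · have h2 : x0.2 < p.2 := by
            by_contra hcc; push_neg at hcc
            exact hQ1 x0 hx0 ⟨hc, hcc⟩
          exact Or.inl ⟨lt_of_le_of_ne hc fun he => hQ3 x0 hx0 ⟨he.ge, h2.le⟩, h2⟩
      obtain ⟨y, hy⟩ := hF3 p hpK ⟨x0, hx0⟩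
      have hbt := hbtw p ⟨x0, hx0⟩ y hy
      have hbt1 : |x0.1 - (↑y : ℝ × ℝ).1| = |x0.1 - p.1| + |p.1 - (↑y : ℝ × ℝ).1| := hbt.1
      have hbt2 : |x0.2 - (↑y : ℝ × ℝ).2| = |x0.2 - p.2| + |p.2 - (↑y : ℝ × ℝ).2| := hbt.2
      rcases hx0pos with ⟨ha1, ha2⟩ | ⟨ha1, ha2⟩
      · have hy1 : (↑y : ℝ × ℝ).1 ≤ p.1 := between_le hbt1 ha1
        have hy2 : p.2 ≤ (↑y : ℝ × ℝ).2 := between_ge hbt2 ha2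
        have hy1s : (↑y : ℝ × ℝ).1 < p.1 :=
          lt_of_le_of_ne hy1 fun he => hQ1 ↑y y.2 ⟨he.ge, hy2⟩
        have hy2s : p.2 < (↑y : ℝ × ℝ).2 :=
          lt_of_le_of_ne hy2 fun he => hQ3 ↑y y.2 ⟨hy1, he.ge⟩
        exact sep13 X H hH hconn p hQ1 hQ3 x0 hx0 ⟨ha1, ha2⟩ ↑y y.2 ⟨hy1s, hy2s⟩
      · have hy1 : p.1 ≤ (↑y : ℝ × ℝ).1 := between_ge hbt1 ha1
        have hy2 : (↑y : ℝ × ℝ).2 ≤ p.2 := between_le hbt2 ha2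
        have hy1s : p.1 < (↑y : ℝ × ℝ).1 :=
          lt_of_le_of_ne hy1 fun he => hQ3 ↑y y.2 ⟨he.ge, hy2⟩
        have hy2s : (↑y : ℝ × ℝ).2 < p.2 :=
          lt_of_le_of_ne hy2 fun he => hQ1 ↑y y.2 ⟨hy1, he.ge⟩
        exact sep13 X H hH hconn p hQ1 hQ3 ↑y y.2 ⟨hy1s, hy2s⟩ x0 hx0 ⟨ha1, ha2⟩
    -- C = D
    have hCeqD : C = D := by
      by_contra hne'
      have hlt : C < D := lt_of_le_of_ne hCD hne'
      obtain ⟨p, hp1, hp2⟩ : ∃ p : ℝ × ℝ, p.1 = (A + (C + D) / 2) / 2 ∧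
          p.2 = (A - (C + D) / 2) / 2 :=
        ⟨((A + (C + D) / 2) / 2, (A - (C + D) / 2) / 2), rfl, rfl⟩
      have hpu : p.1 + p.2 = A := by rw [hp1, hp2]; ring
      have hpv : p.1 - p.2 = (C + D) / 2 := by rw [hp1, hp2]; ring
      have hpK : ∀ x : X, d1 p ↑x ≤ f x :=
        hKmem p (by linarith) (by linarith) (by linarith) (by linarith)
      have hQ4 : ∀ z ∈ X, ¬(p.1 ≤ z.1 ∧ z.2 ≤ p.2) := by
        rintro z hz ⟨hz1, hz2⟩
        have e : f ⟨z, hz⟩ = d1 p z := hF2 p hpK ⟨z, hz⟩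
        have ed : d1 p z = (z.1 - p.1) + (p.2 - z.2) := by
          unfold d1
          rw [abs_of_nonpos (by linarith : p.1 - z.1 ≤ 0),
            abs_of_nonneg (by linarith : 0 ≤ p.2 - z.2)]
          ring
        have bC : z.1 - z.2 - f ⟨z, hz⟩ ≤ C := hxC ⟨z, hz⟩
        linarith
      have hQ2 : ∀ z ∈ X, ¬(z.1 ≤ p.1 ∧ p.2 ≤ z.2) := by
        rintro z hz ⟨hz1, hz2⟩
        have e : f ⟨z, hz⟩ = d1 p z := hF2 p hpK ⟨z, hz⟩
        have ed : d1 p z = (p.1 - z.1) + (z.2 - p.2) := by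
          unfold d1
          rw [abs_of_nonneg (by linarith : 0 ≤ p.1 - z.1),
            abs_of_nonpos (by linarith : p.2 - z.2 ≤ 0)]
          ring
        have bD : D ≤ z.1 - z.2 + f ⟨z, hz⟩ := hxD ⟨z, hz⟩
        linarith
      obtain ⟨x0, hx0⟩ := hne
      have hx0pos : (p.1 < x0.1 ∧ p.2 < x0.2) ∨ (x0.1 < p.1 ∧ x0.2 < p.2) := by
        rcases lt_or_ge x0.1 p.1 with hc | hc
        · right
          refine ⟨hc, ?_⟩
          by_contra hcc; push_neg at hcc
          exact hQ2 x0 hx0 ⟨hc.le, hcc⟩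
        · have h2 : p.2 < x0.2 := by
            by_contra hcc; push_neg at hcc
            exact hQ4 x0 hx0 ⟨hc, hcc⟩
          exact Or.inl ⟨lt_of_le_of_ne hc fun he => hQ2 x0 hx0 ⟨he.ge, h2.le⟩, h2⟩
      obtain ⟨y, hy⟩ := hF3 p hpK ⟨x0, hx0⟩
      have hbt := hbtw p ⟨x0, hx0⟩ y hy
      have hbt1 : |x0.1 - (↑y : ℝ × ℝ).1| = |x0.1 - p.1| + |p.1 - (↑y : ℝ × ℝ).1| := hbt.1
      have hbt2 : |x0.2 - (↑y : ℝ × ℝ).2| = |x0.2 - p.2| + |p.2 - (↑y : ℝ × ℝ).2| := hbt.2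
      rcases hx0pos with ⟨ha1, ha2⟩ | ⟨ha1, ha2⟩
      · have hy1 : (↑y : ℝ × ℝ).1 ≤ p.1 := between_le hbt1 ha1
        have hy2 : (↑y : ℝ × ℝ).2 ≤ p.2 := between_le hbt2 ha2
        have hy1s : (↑y : ℝ × ℝ).1 < p.1 :=
          lt_of_le_of_ne hy1 fun he => hQ4 ↑y y.2 ⟨he.ge, hy2⟩
        have hy2s : (↑y : ℝ × ℝ).2 < p.2 :=
          lt_of_le_of_ne hy2 fun he => hQ2 ↑y y.2 ⟨hy1, he.ge⟩
        exact sep24 X H hH hconn p hQ2 hQ4 x0 hx0 ⟨ha1, ha2⟩ ↑y y.2 ⟨hy1s, hy2s⟩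
      · have hy1 : p.1 ≤ (↑y : ℝ × ℝ).1 := between_ge hbt1 ha1
        have hy2 : p.2 ≤ (↑y : ℝ × ℝ).2 := between_ge hbt2 ha2
        have hy1s : p.1 < (↑y : ℝ × ℝ).1 :=
          lt_of_le_of_ne hy1 fun he => hQ2 ↑y y.2 ⟨he.ge, hy2⟩
        have hy2s : p.2 < (↑y : ℝ × ℝ).2 :=
          lt_of_le_of_ne hy2 fun he => hQ4 ↑y y.2 ⟨hy1, he.ge⟩
        exact sep24 X H hH hconn p hQ2 hQ4 ↑y y.2 ⟨hy1s, hy2s⟩ x0 hx0 ⟨ha1, ha2⟩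
    -- the final point
    obtain ⟨p, hp1, hp2⟩ : ∃ p : ℝ × ℝ, p.1 = (A + C) / 2 ∧ p.2 = (A - C) / 2 :=
      ⟨((A + C) / 2, (A - C) / 2), rfl, rfl⟩
    have hpu : p.1 + p.2 = A := by rw [hp1, hp2]; ring
    have hpv : p.1 - p.2 = C := by rw [hp1, hp2]; ring
    have hpK : ∀ x : X, d1 p ↑x ≤ f x :=
      hKmem p (by linarith) (by linarith) (by linarith) (by linarith)
    have hsur : Surrounded p X := by
      have eA : f xA = d1 p ↑xA := hF2 p hpK xA
      have eB : f xB = d1 p ↑xB := hF2 p hpK xB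
      have eC : f xC = d1 p ↑xC := hF2 p hpK xC
      have eD : f xD = d1 p ↑xD := hF2 p hpK xD
      unfold d1 at eA eB eC eD
      refine ⟨⟨↑xA, xA.2, ?_, ?_⟩, ⟨↑xD, xD.2, ?_, ?_⟩, ⟨↑xC, xC.2, ?_, ?_⟩, ⟨↑xB, xB.2, ?_, ?_⟩⟩
      · -- p.1 ≤ xA.1
        have k1 := neg_le_abs (p.1 - (↑xA : ℝ × ℝ).1)
        have k2 := neg_le_abs (p.2 - (↑xA : ℝ × ℝ).2)
        have k3 := abs_nonneg (p.1 - (↑xA : ℝ × ℝ).1)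
        rw [hAdef] at hpu
        linarith
      · have k1 := neg_le_abs (p.1 - (↑xA : ℝ × ℝ).1)
        have k2 := neg_le_abs (p.2 - (↑xA : ℝ × ℝ).2)
        have k4 := abs_nonneg (p.2 - (↑xA : ℝ × ℝ).2)
        rw [hAdef] at hpu
        linarith
      · -- xD.1 ≤ p.1 : from v xD + f xD = D = C = v p
        have k1 := le_abs_self (p.1 - (↑xD : ℝ × ℝ).1)
        have k2 := neg_le_abs (p.2 - (↑xD : ℝ × ℝ).2)
        have k3 := abs_nonneg (p.1 - (↑xD : ℝ × ℝ).1)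
        have hvD : p.1 - p.2 = D := by rw [hpv, hCeqD]
        rw [hDdef] at hvD
        linarith
      · -- p.2 ≤ xD.2
        have k1 := le_abs_self (p.1 - (↑xD : ℝ × ℝ).1)
        have k2 := neg_le_abs ((↑xD : ℝ × ℝ).2 - p.2)
        have k2' : |(↑xD : ℝ × ℝ).2 - p.2| = |p.2 - (↑xD : ℝ × ℝ).2| := abs_sub_comm _ _
        have k4 := abs_nonneg ((↑xD : ℝ × ℝ).2 - p.2)
        have hvD : p.1 - p.2 = D := by rw [hpv, hCeqD]
        rw [hDdef] at hvD
        linarith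
      · -- p.1 ≤ xC.1 : from v xC − f xC = C = v p
        have k1 := neg_le_abs (p.1 - (↑xC : ℝ × ℝ).1)
        have k2 := le_abs_self (p.2 - (↑xC : ℝ × ℝ).2)
        have k3 := abs_nonneg (p.1 - (↑xC : ℝ × ℝ).1)
        rw [hCdef] at hpv
        linarith
      · -- xC.2 ≤ p.2
        have k1 := neg_le_abs (p.1 - (↑xC : ℝ × ℝ).1)
        have k2 := le_abs_self (p.2 - (↑xC : ℝ × ℝ).2)
        have k4 := abs_nonneg (p.2 - (↑xC : ℝ × ℝ).2)
        rw [hCdef] at hpv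
        linarith
      · -- xB.1 ≤ p.1 : from u xB + f xB = B = A = u p
        have k1 := le_abs_self (p.1 - (↑xB : ℝ × ℝ).1)
        have k2 := le_abs_self (p.2 - (↑xB : ℝ × ℝ).2)
        have k3 := abs_nonneg (p.1 - (↑xB : ℝ × ℝ).1)
        have huB : p.1 + p.2 = B := by rw [hpu, hAeqB]
        rw [hBdef] at huB
        linarith
      · have k1 := le_abs_self (p.1 - (↑xB : ℝ × ℝ).1)
        have k2 := le_abs_self (p.2 - (↑xB : ℝ × ℝ).2)
        have k4 := abs_nonneg (p.2 - (↑xB : ℝ × ℝ).2)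
        have huB : p.1 + p.2 = B := by rw [hpu, hAeqB]
        rw [hBdef] at huB
        linarith
    refine ⟨p, ?_, ?_⟩
    · rw [hH]; exact hsur
    · funext x
      exact (hF2 p hpK x).symm
  exact ⟨⟨fun h hh => mapsTo h hh, injOn, surjOn⟩, part2⟩
end

section
/- Let (X,d) be a metric space, let γ : [0,L] → X be an isometric embedding of the real interval [0,L] (L ≥ 0) with image P and p = γ(0), and let s ∈ X with s ∉ P. Define φ : P ∪ {s} → ℝ² by φ(r) = ((d(p,r) + d(r,s) − d(p,s))/2, (d(p,s) − d(p,r) + d(r,s))/2) for r ∈ P and φ(s) = (0,0). Then both coordinates of φ(r) are nonnegative for every r ∈ P, and φ is an isometric embedding of P ∪ {s} into the L1 plane: d₁(φ(r), φ(r')) = d(r,r') for all r, r' ∈ P and d₁(φ(r), (0,0)) = d(r,s) for all r ∈ P. -/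
lemma aux_abs (A B : ℝ) (h : |B| ≤ |A|) : |A + B| + |A - B| = 2 * |A| := by
  rcases le_or_gt 0 A with hA | hA
  · rw [abs_of_nonneg hA] at h ⊢
    rw [abs_le] at h
    rw [abs_of_nonneg (by linarith), abs_of_nonneg (by linarith)]
    ring
  · rw [abs_of_neg hA] at h ⊢
    rw [abs_le] at h
    rw [abs_of_nonpos (by linarith), abs_of_nonpos (by linarith)]
    ring

theorem stmt8 {X : Type*} [MetricSpace X] (L : ℝ) (hL : 0 ≤ L) (γ : ℝ → X)
    (hγ : ∀ t ∈ Set.Icc 0 L, ∀ t' ∈ Set.Icc 0 L, dist (γ t) (γ t') = |t - t'|)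
    (P : Set X) (hP : P = γ '' Set.Icc 0 L) (s : X) (hs : s ∉ P)
    (φ : X → ℝ × ℝ)
    (hφ : φ = fun r => ((dist (γ 0) r + dist r s - dist (γ 0) s) / 2,
                        (dist (γ 0) s - dist (γ 0) r + dist r s) / 2)) :
    φ s = (0, 0) ∧
    (∀ r ∈ P, 0 ≤ (φ r).1 ∧ 0 ≤ (φ r).2) ∧
    (∀ r ∈ P, ∀ r' ∈ P, d1 (φ r) (φ r') = dist r r') ∧
    (∀ r ∈ P, d1 (φ r) (0, 0) = dist r s) := by
  subst hφ hP
  refine ⟨by simp, ?_, ?_, ?_⟩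
  · rintro r -
    constructor
    · have := dist_triangle (γ 0) r s
      simp only []
      linarith
    · have h1 := dist_triangle (γ 0) s r
      rw [dist_comm s r] at h1
      simp only []
      linarith
  · rintro r ⟨t, ht, rfl⟩ r' ⟨t', ht', rfl⟩
    have hd : dist (γ t) (γ t') = |t - t'| := hγ t ht t' ht'
    have h0 : (0 : ℝ) ∈ Set.Icc 0 L := ⟨le_refl _, hL⟩
    have hpt : dist (γ 0) (γ t) = t := by
      rw [hγ 0 h0 t ht, abs_of_nonpos (by linarith [ht.1]), neg_sub, sub_zero]
    have hpt' : dist (γ 0) (γ t') = t' := by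
      rw [hγ 0 h0 t' ht', abs_of_nonpos (by linarith [ht'.1]), neg_sub, sub_zero]
    have hB : |dist (γ t) s - dist (γ t') s| ≤ |t - t'| := by
      rw [← hd]; exact abs_dist_sub_le _ _ _
    set A : ℝ := t - t'
    set B : ℝ := dist (γ t) s - dist (γ t') s
    have key : |A + B| + |A - B| = 2 * |A| := aux_abs A B hB
    simp only [d1, hd]
    have e1 : (dist (γ 0) (γ t) + dist (γ t) s - dist (γ 0) s) / 2 -
        (dist (γ 0) (γ t') + dist (γ t') s - dist (γ 0) s) / 2 = (A + B) / 2 := by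
      rw [hpt, hpt']; simp only [A, B]; ring
    have e2 : (dist (γ 0) s - dist (γ 0) (γ t) + dist (γ t) s) / 2 -
        (dist (γ 0) s - dist (γ 0) (γ t') + dist (γ t') s) / 2 = (B - A) / 2 := by
      rw [hpt, hpt']; simp only [A, B]; ring
    rw [e1, e2, abs_div, abs_div, abs_two, ← abs_neg (B - A), neg_sub]
    linarith
  · rintro r ⟨t, ht, rfl⟩
    have h0 : (0 : ℝ) ∈ Set.Icc 0 L := ⟨le_refl _, hL⟩
    have hpt : dist (γ 0) (γ t) = t := by
      rw [hγ 0 h0 t ht, abs_of_nonpos (by linarith [ht.1]), neg_sub, sub_zero]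
    have h1 := dist_triangle (γ 0) (γ t) s
    have h2 := dist_triangle (γ 0) s (γ t)
    rw [dist_comm s (γ t)] at h2
    simp only [d1, sub_zero]
    rw [abs_of_nonneg (by linarith), abs_of_nonneg (by linarith)]
    ring
end

section
/- Let (X,d) be a metric space, let γ : [0,L] → X be an isometric embedding with image P and p = γ(0), let s ∈ X with s ∉ P, and let φ : P ∪ {s} → ℝ² be defined by φ(r) = ((d(p,r) + d(r,s) − d(p,s))/2, (d(p,s) − d(p,r) + d(r,s))/2) for r ∈ P and φ(s) = (0,0). Let H be the orthogonal convex hull of φ(P ∪ {s}) in the L1 plane. Then H is connected, and the map sending h ∈ H to the function w ↦ d₁(h, φ(w)) on P ∪ {s} is a bijective isometry from H (with metric d₁) onto the tight span T(P ∪ {s}), where P ∪ {s} carries the metric restricted from X. -/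
private lemma abs_half_max (u v : ℝ) : |(u + v) / 2| + |(u - v) / 2| = max |u| |v| := by
  rcases abs_cases u with ⟨hu, hu'⟩ | ⟨hu, hu'⟩ <;>
    rcases abs_cases v with ⟨hv, hv'⟩ | ⟨hv, hv'⟩ <;>
      rcases abs_cases ((u + v) / 2) with ⟨h1, h1'⟩ | ⟨h1, h1'⟩ <;>
        rcases abs_cases ((u - v) / 2) with ⟨h2, h2'⟩ | ⟨h2, h2'⟩ <;>
          rcases max_cases |u| |v| with ⟨hm, hm'⟩ | ⟨hm, hm'⟩ <;> linarith

private lemma betw {x y z : ℝ} (h : x ≤ y ∧ y ≤ z ∨ z ≤ y ∧ y ≤ x) :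
    |x - y| + |y - z| = |x - z| := by
  rcases h with ⟨h1, h2⟩ | ⟨h1, h2⟩
  · rw [abs_of_nonpos (by linarith), abs_of_nonpos (by linarith),
      abs_of_nonpos (by linarith : x - z ≤ 0)]; ring
  · rw [abs_of_nonneg (by linarith), abs_of_nonneg (by linarith),
      abs_of_nonneg (by linarith : (0:ℝ) ≤ x - z)]; ring

theorem stmt9 {X : Type*} [MetricSpace X] (L : ℝ) (hL : 0 ≤ L) (γ : ℝ → X)
    (hγ : ∀ t ∈ Set.Icc 0 L, ∀ t' ∈ Set.Icc 0 L, dist (γ t) (γ t') = |t - t'|)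
    (P : Set X) (hP : P = γ '' Set.Icc 0 L) (s : X) (hs : s ∉ P)
    (φ : X → ℝ × ℝ)
    (hφ : φ = fun r => ((dist (γ 0) r + dist r s - dist (γ 0) s) / 2,
                        (dist (γ 0) s - dist (γ 0) r + dist r s) / 2))
    (H : Set (ℝ × ℝ)) (hH : H = {h | Surrounded h (φ '' insert s P)}) :
    IsConnected H ∧
    Set.BijOn (fun h => fun w : ↥(insert s P) => d1 h (φ ↑w)) H
      (TightSpan ↥(insert s P)) ∧
    ∀ h ∈ H, ∀ h' ∈ H,
      d1 h h' = ⨆ w : ↥(insert s P), |d1 h (φ ↑w) - d1 h' (φ ↑w)| := by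
  have h0mem : (0:ℝ) ∈ Set.Icc (0:ℝ) L := ⟨le_refl 0, hL⟩
  have hpP : γ 0 ∈ P := by rw [hP]; exact ⟨0, h0mem, rfl⟩
  have hsZ : s ∈ insert s P := Set.mem_insert _ _
  have hpZ : γ 0 ∈ insert s P := Set.mem_insert_of_mem _ hpP
  have hγmem : ∀ t ∈ Set.Icc (0:ℝ) L, γ t ∈ insert s P := fun t ht =>
    Set.mem_insert_of_mem _ (by rw [hP]; exact ⟨t, ht, rfl⟩)
  set D := dist (γ 0) s with hD
  have hDnn : 0 ≤ D := dist_nonneg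
  have hφ1 : ∀ r, (φ r).1 = (dist (γ 0) r + dist r s - D) / 2 := fun r => by
    simp only [hφ]
  have hφ2 : ∀ r, (φ r).2 = (D - dist (γ 0) r + dist r s) / 2 := fun r => by
    simp only [hφ]
  have hx0 : ∀ r, 0 ≤ (φ r).1 := fun r => by
    rw [hφ1 r]; linarith [dist_triangle (γ 0) r s, hD]
  have hy0 : ∀ r, 0 ≤ (φ r).2 := fun r => by
    rw [hφ2 r]; linarith [dist_triangle (γ 0) s r, dist_comm s r, hD]
  have hyD : ∀ r, (φ r).2 ≤ D := fun r => by
    rw [hφ2 r]; linarith [dist_triangle r (γ 0) s, dist_comm r (γ 0), hD]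
  have hφs : φ s = (0, 0) := by
    simp only [hφ, dist_self, Prod.mk.injEq]
    constructor <;> linarith [hD]
  have hφp : φ (γ 0) = (0, D) := by
    simp only [hφ, dist_self, Prod.mk.injEq]
    constructor <;> linarith [hD]
  have hdistp : ∀ t ∈ Set.Icc (0:ℝ) L, dist (γ 0) (γ t) = t := fun t ht => by
    rw [hγ 0 h0mem t ht, zero_sub, abs_neg, abs_of_nonneg ht.1]
  have hmem : ∀ r ∈ insert s P, r = s ∨ ∃ t, t ∈ Set.Icc (0:ℝ) L ∧ γ t = r := by
    intro r hr
    rcases Set.mem_insert_iff.mp hr with h | h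
    · exact Or.inl h
    · rw [hP] at h; obtain ⟨t, ht, rfl⟩ := h; exact Or.inr ⟨t, ht, rfl⟩
  have hiso : ∀ w ∈ insert s P, ∀ w' ∈ insert s P, d1 (φ w) (φ w') = dist w w' := by
    intro w hw w' hw'
    have halg : d1 (φ w) (φ w') = max |dist w s - dist w' s| |dist (γ 0) w - dist (γ 0) w'| := by
      rw [d1, hφ1, hφ1, hφ2, hφ2,
        show (dist (γ 0) w + dist w s - D) / 2 - (dist (γ 0) w' + dist w' s - D) / 2 =
          ((dist w s - dist w' s) + (dist (γ 0) w - dist (γ 0) w')) / 2 by ring,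
        show (D - dist (γ 0) w + dist w s) / 2 - (D - dist (γ 0) w' + dist w' s) / 2 =
          ((dist w s - dist w' s) - (dist (γ 0) w - dist (γ 0) w')) / 2 by ring]
      exact abs_half_max _ _
    rw [halg]
    rcases hmem w hw with hws | ⟨t, ht, rfl⟩
    · rw [hws]
      rcases hmem w' hw' with hws' | ⟨t', ht', rfl⟩
      · rw [hws']
        simp
      · have h1 : |dist s s - dist (γ t') s| = dist s (γ t') := by
          rw [dist_self, zero_sub, abs_neg, abs_of_nonneg dist_nonneg, dist_comm]
        have h2 : |dist (γ 0) s - dist (γ 0) (γ t')| ≤ dist s (γ t') := by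
          rw [dist_comm (γ 0) s, dist_comm (γ 0) (γ t')]
          exact abs_dist_sub_le s (γ t') (γ 0)
        rw [h1]; exact max_eq_left h2
    · rcases hmem w' hw' with hws' | ⟨t', ht', rfl⟩
      · rw [hws']
        have h1 : |dist (γ t) s - dist s s| = dist (γ t) s := by
          rw [dist_self, sub_zero, abs_of_nonneg dist_nonneg]
        have h2 : |dist (γ 0) (γ t) - dist (γ 0) s| ≤ dist (γ t) s := by
          rw [dist_comm (γ 0) (γ t), dist_comm (γ 0) s]
          exact abs_dist_sub_le (γ t) s (γ 0)
        rw [h1]; exact max_eq_left h2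
      · have h1 : |dist (γ 0) (γ t) - dist (γ 0) (γ t')| = dist (γ t) (γ t') := by
          rw [hdistp t ht, hdistp t' ht', hγ t ht t' ht']
        have h2 : |dist (γ t) s - dist (γ t') s| ≤ dist (γ t) (γ t') :=
          abs_dist_sub_le _ _ _
        rw [h1]; exact max_eq_right h2
  have hbd : ∀ h : ℝ × ℝ, Surrounded h (φ '' insert s P) → 0 ≤ h.1 ∧ 0 ≤ h.2 ∧ h.2 ≤ D := by
    intro h hsur
    obtain ⟨-, ⟨z2, hz2, -, hz2y⟩, -, ⟨z4, hz4, hz4x, hz4y⟩⟩ := hsur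
    obtain ⟨r2, -, rfl⟩ := hz2
    obtain ⟨r4, -, rfl⟩ := hz4
    exact ⟨le_trans (hx0 r4) hz4x, le_trans (hy0 r4) hz4y, le_trans hz2y (hyD r2)⟩
  haveI : Nonempty ↥(insert s P) := ⟨⟨s, hsZ⟩⟩
  haveI : CompactSpace ↥(insert s P) := by
    rw [← isCompact_iff_compactSpace]
    have hPc : IsCompact P := by
      rw [hP]
      refine IsCompact.image_of_continuousOn isCompact_Icc ?_
      refine LipschitzOnWith.continuousOn (K := 1) ?_
      rw [lipschitzOnWith_iff_dist_le_mul]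
      intro a ha b hb
      rw [hγ a ha b hb]
      simp [Real.dist_eq]
    exact hPc.insert s
  -- Part 1 : connectedness
  have hH0 : ∀ v : ℝ, 0 ≤ v → v ≤ D → ((0 : ℝ), v) ∈ H := by
    intro v hv0 hvD
    rw [hH]
    refine ⟨⟨φ (γ 0), ⟨γ 0, hpZ, rfl⟩, ?_, ?_⟩, ⟨φ (γ 0), ⟨γ 0, hpZ, rfl⟩, ?_, ?_⟩,
      ⟨φ s, ⟨s, hsZ, rfl⟩, ?_, ?_⟩, ⟨φ s, ⟨s, hsZ, rfl⟩, ?_, ?_⟩⟩ <;>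
      simp only [hφp, hφs] <;> first | exact le_refl (0:ℝ) | exact hv0 | exact hvD
  have hHs : ∀ h : ℝ × ℝ, h ∈ H → ∀ u : ℝ, 0 ≤ u → u ≤ h.1 → ((u : ℝ), h.2) ∈ H := by
    intro h hh u hu0 hu1
    rw [hH] at hh ⊢
    obtain ⟨hb1, hb2, hb3⟩ := hbd h hh
    obtain ⟨c1, c2, c3, c4⟩ := hh
    refine ⟨?_, ?_, ?_, ?_⟩
    · obtain ⟨z, hz, hzx, hzy⟩ := c1
      exact ⟨z, hz, le_trans hu1 hzx, hzy⟩
    · refine ⟨φ (γ 0), ⟨γ 0, hpZ, rfl⟩, ?_, ?_⟩ <;> simp only [hφp]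
      · exact hu0
      · exact hb3
    · obtain ⟨z, hz, hzx, hzy⟩ := c3
      exact ⟨z, hz, le_trans hu1 hzx, hzy⟩
    · refine ⟨φ s, ⟨s, hsZ, rfl⟩, ?_, ?_⟩ <;> simp only [hφs]
      · exact hu0
      · exact hb2
  have hconn : IsConnected H := by
    refine IsPathConnected.isConnected ?_
    refine ⟨((0:ℝ), (0:ℝ)), hH0 0 le_rfl hDnn, ?_⟩
    intro y hy
    obtain ⟨hy1, hy2, hy3⟩ := hbd y (by rw [hH] at hy; exact hy)
    have seg1 : segment ℝ ((0:ℝ), (0:ℝ)) ((0:ℝ), y.2) ⊆ H := by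
      rintro x ⟨a, b, ha, hb, hab, rfl⟩
      have hx : a • (((0:ℝ), (0:ℝ)) : ℝ × ℝ) + b • (((0:ℝ), y.2) : ℝ × ℝ) = ((0:ℝ), b * y.2) := by
        simp only [Prod.smul_mk, smul_eq_mul, Prod.mk_add_mk, Prod.mk.injEq]
        constructor <;> ring
      rw [hx]
      exact hH0 _ (mul_nonneg hb hy2) (by nlinarith)
    have seg2 : segment ℝ ((0:ℝ), y.2) y ⊆ H := by
      rintro x ⟨a, b, ha, hb, hab, rfl⟩
      have hx : a • (((0:ℝ), y.2) : ℝ × ℝ) + b • y = ((b * y.1 : ℝ), y.2) := by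
        have : y = (y.1, y.2) := rfl
        rw [this]
        simp only [Prod.smul_mk, smul_eq_mul, Prod.mk_add_mk, Prod.mk.injEq]
        constructor
        · ring
        · nlinarith
      rw [hx]
      exact hHs y hy (b * y.1) (mul_nonneg hb hy1) (by nlinarith)
    have hmem1 : (((0:ℝ), y.2) : ℝ × ℝ) ∈ H := hH0 y.2 hy2 hy3
    have j1 : JoinedIn H ((0:ℝ), (0:ℝ)) ((0:ℝ), y.2) := by
      have hpc := (convex_segment (((0:ℝ), (0:ℝ)) : ℝ × ℝ) ((0:ℝ), y.2)).isPathConnected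
        ⟨_, left_mem_segment ℝ _ _⟩
      exact (hpc.joinedIn _ (left_mem_segment ℝ _ _) _ (right_mem_segment ℝ _ _)).mono seg1
    have j2 : JoinedIn H ((0:ℝ), y.2) y := by
      have hpc := (convex_segment (((0:ℝ), y.2) : ℝ × ℝ) y).isPathConnected
        ⟨_, left_mem_segment ℝ _ _⟩
      exact (hpc.joinedIn _ (left_mem_segment ℝ _ _) _ (right_mem_segment ℝ _ _)).mono seg2
    exact j1.trans j2
  -- Part 2a : maps to tight span
  have hmaps : ∀ h ∈ H, (fun w : ↥(insert s P) => d1 h (φ ↑w)) ∈ TightSpan ↥(insert s P) := by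
    intro h hh
    rw [hH] at hh
    obtain ⟨c1, c2, c3, c4⟩ := hh
    simp only [TightSpan, Set.mem_setOf_eq]
    constructor
    · intro x y
      show dist x y ≤ d1 h (φ ↑x) + d1 h (φ ↑y)
      rw [Subtype.dist_eq, ← hiso ↑x x.2 ↑y y.2, d1, d1, d1]
      linarith [abs_sub_le (φ (↑x : X)).1 h.1 (φ (↑y : X)).1,
        abs_sub_le (φ (↑x : X)).2 h.2 (φ (↑y : X)).2,
        abs_sub_comm (φ (↑x : X)).1 h.1, abs_sub_comm (φ (↑x : X)).2 h.2]
    · intro x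
      have hnn : ∀ w : ↥(insert s P), 0 ≤ d1 h (φ ↑x) + d1 h (φ ↑w) - dist x w := by
        intro w
        rw [Subtype.dist_eq, ← hiso ↑x x.2 ↑w w.2, d1, d1, d1]
        linarith [abs_sub_le (φ (↑x : X)).1 h.1 (φ (↑w : X)).1,
          abs_sub_le (φ (↑x : X)).2 h.2 (φ (↑w : X)).2,
          abs_sub_comm (φ (↑x : X)).1 h.1, abs_sub_comm (φ (↑x : X)).2 h.2]
      obtain ⟨w0, hw0⟩ :
          ∃ w0 : ↥(insert s P), d1 h (φ ↑x) + d1 h (φ ↑w0) - dist x w0 = 0 := by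
        rcases le_total (φ (↑x : X)).1 h.1 with hx1 | hx1 <;>
          rcases le_total (φ (↑x : X)).2 h.2 with hx2 | hx2
        · obtain ⟨z, ⟨r, hr, rfl⟩, hzx, hzy⟩ := c1
          refine ⟨⟨r, hr⟩, ?_⟩
          have e1 := betw (Or.inl ⟨hx1, hzx⟩ :
            (φ (↑x : X)).1 ≤ h.1 ∧ h.1 ≤ (φ r).1 ∨ _)
          have e2 := betw (Or.inl ⟨hx2, hzy⟩ :
            (φ (↑x : X)).2 ≤ h.2 ∧ h.2 ≤ (φ r).2 ∨ _)
          show d1 h (φ ↑x) + d1 h (φ r) - dist (↑x : X) r = 0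
          rw [← hiso ↑x x.2 r hr, d1, d1, d1]
          linarith [abs_sub_comm h.1 (φ (↑x : X)).1, abs_sub_comm h.2 (φ (↑x : X)).2]
        · obtain ⟨z, ⟨r, hr, rfl⟩, hzx, hzy⟩ := c3
          refine ⟨⟨r, hr⟩, ?_⟩
          have e1 := betw (Or.inl ⟨hx1, hzx⟩ :
            (φ (↑x : X)).1 ≤ h.1 ∧ h.1 ≤ (φ r).1 ∨ _)
          have e2 := betw (Or.inr ⟨hzy, hx2⟩ :
            (φ (↑x : X)).2 ≤ h.2 ∧ h.2 ≤ (φ r).2 ∨ (φ r).2 ≤ h.2 ∧ h.2 ≤ (φ (↑x : X)).2)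
          show d1 h (φ ↑x) + d1 h (φ r) - dist (↑x : X) r = 0
          rw [← hiso ↑x x.2 r hr, d1, d1, d1]
          linarith [abs_sub_comm h.1 (φ (↑x : X)).1, abs_sub_comm h.2 (φ (↑x : X)).2]
        · obtain ⟨z, ⟨r, hr, rfl⟩, hzx, hzy⟩ := c2
          refine ⟨⟨r, hr⟩, ?_⟩
          have e1 := betw (Or.inr ⟨hzx, hx1⟩ :
            (φ (↑x : X)).1 ≤ h.1 ∧ h.1 ≤ (φ r).1 ∨ (φ r).1 ≤ h.1 ∧ h.1 ≤ (φ (↑x : X)).1)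
          have e2 := betw (Or.inl ⟨hx2, hzy⟩ :
            (φ (↑x : X)).2 ≤ h.2 ∧ h.2 ≤ (φ r).2 ∨ _)
          show d1 h (φ ↑x) + d1 h (φ r) - dist (↑x : X) r = 0
          rw [← hiso ↑x x.2 r hr, d1, d1, d1]
          linarith [abs_sub_comm h.1 (φ (↑x : X)).1, abs_sub_comm h.2 (φ (↑x : X)).2]
        · obtain ⟨z, ⟨r, hr, rfl⟩, hzx, hzy⟩ := c4
          refine ⟨⟨r, hr⟩, ?_⟩
          have e1 := betw (Or.inr ⟨hzx, hx1⟩ :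
            (φ (↑x : X)).1 ≤ h.1 ∧ h.1 ≤ (φ r).1 ∨ (φ r).1 ≤ h.1 ∧ h.1 ≤ (φ (↑x : X)).1)
          have e2 := betw (Or.inr ⟨hzy, hx2⟩ :
            (φ (↑x : X)).2 ≤ h.2 ∧ h.2 ≤ (φ r).2 ∨ (φ r).2 ≤ h.2 ∧ h.2 ≤ (φ (↑x : X)).2)
          show d1 h (φ ↑x) + d1 h (φ r) - dist (↑x : X) r = 0
          rw [← hiso ↑x x.2 r hr, d1, d1, d1]
          linarith [abs_sub_comm h.1 (φ (↑x : X)).1, abs_sub_comm h.2 (φ (↑x : X)).2]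
      have hbdd : BddBelow (Set.range fun w : ↥(insert s P) =>
          d1 h (φ ↑x) + d1 h (φ ↑w) - dist x w) := ⟨0, by rintro v ⟨w, rfl⟩; exact hnn w⟩
      refine le_antisymm ?_ (le_ciInf hnn)
      calc (⨅ w : ↥(insert s P), (d1 h (φ ↑x) + d1 h (φ ↑w) - dist x w)) ≤
            d1 h (φ ↑x) + d1 h (φ ↑w0) - dist x w0 := ciInf_le hbdd w0
        _ = 0 := hw0
  -- facts about tight span elements
  have hTfacts : ∀ f ∈ TightSpan ↥(insert s P),
      (∀ x y : ↥(insert s P), dist (↑x : X) ↑y ≤ f x + f y) ∧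
      (∀ x y : ↥(insert s P), f x ≤ f y + dist (↑x : X) ↑y) ∧
      (∀ x : ↥(insert s P), ∃ w, f x + f w = dist (↑x : X) ↑w) := by
    intro f hf
    simp only [TightSpan, Set.mem_setOf_eq] at hf
    obtain ⟨hf1, hf2⟩ := hf
    have hf1' : ∀ x y : ↥(insert s P), dist (↑x : X) ↑y ≤ f x + f y := fun x y => by
      rw [← Subtype.dist_eq]; exact hf1 x y
    have hlip : ∀ x y : ↥(insert s P), f x ≤ f y + dist (↑x : X) ↑y := by
      intro x y
      refine le_of_forall_pos_le_add ?_
      intro ε hε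
      have h0 : (⨅ w, (f x + f w - dist x w)) < ε := by rw [hf2 x]; exact hε
      obtain ⟨w, hw⟩ := exists_lt_of_ciInf_lt h0
      have t1 : dist (↑y : X) ↑w ≤ f y + f w := hf1' y w
      have t2 : dist (↑x : X) ↑w ≤ dist (↑x : X) ↑y + dist (↑y : X) ↑w := dist_triangle _ _ _
      rw [Subtype.dist_eq] at hw
      linarith
    have hlipf : LipschitzWith 1 f := by
      refine LipschitzWith.of_dist_le_mul ?_
      intro x y
      rw [Real.dist_eq, NNReal.coe_one, one_mul, abs_sub_le_iff]
      constructor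
      · have := hlip x y
        rw [← Subtype.dist_eq] at this
        linarith
      · have := hlip y x
        rw [← Subtype.dist_eq, dist_comm] at this
        linarith
    have hatt : ∀ x : ↥(insert s P), ∃ w, f x + f w = dist (↑x : X) ↑w := by
      intro x
      have hc : Continuous fun w : ↥(insert s P) => f x + f w - dist x w :=
        (continuous_const.add hlipf.continuous).sub (continuous_const.dist continuous_id)
      obtain ⟨w0, -, hw0⟩ := isCompact_univ.exists_isMinOn Set.univ_nonempty hc.continuousOn
      have hmin : ∀ w, f x + f w0 - dist x w0 ≤ f x + f w - dist x w := fun w =>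
        isMinOn_iff.mp hw0 w (Set.mem_univ w)
      have h0 : f x + f w0 - dist x w0 = 0 := by
        refine le_antisymm ?_ ?_
        · have hle := le_ciInf hmin
          rw [hf2 x] at hle
          exact hle
        · have := hf1 x w0
          linarith
      refine ⟨w0, ?_⟩
      rw [← Subtype.dist_eq]
      linarith
    exact ⟨hf1', hlip, hatt⟩
  -- Part 2c : surjectivity
  have hsurj : ∀ f ∈ TightSpan ↥(insert s P),
      ∃ hp ∈ H, (fun w : ↥(insert s P) => d1 hp (φ ↑w)) = f := by
    intro f hf
    obtain ⟨hf1, hlip, hatt⟩ := hTfacts f hf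
    set A := f ⟨s, hsZ⟩ with hA
    set B := f ⟨γ 0, hpZ⟩ with hB
    have hdsp : dist s (γ 0) = D := by rw [hD, dist_comm]
    have hAB1 : D ≤ A + B := by
      have := hf1 ⟨s, hsZ⟩ ⟨γ 0, hpZ⟩
      rw [show ((↑(⟨s, hsZ⟩ : ↥(insert s P)) : X)) = s from rfl] at this
      rw [show ((↑(⟨γ 0, hpZ⟩ : ↥(insert s P)) : X)) = γ 0 from rfl] at this
      rw [hdsp] at this
      linarith [hA, hB]
    have hAB2 : A ≤ B + D := by
      have := hlip ⟨s, hsZ⟩ ⟨γ 0, hpZ⟩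
      rw [show ((↑(⟨s, hsZ⟩ : ↥(insert s P)) : X)) = s from rfl] at this
      rw [show ((↑(⟨γ 0, hpZ⟩ : ↥(insert s P)) : X)) = γ 0 from rfl] at this
      rw [hdsp] at this
      linarith [hA, hB]
    have hAB3 : B ≤ A + D := by
      have := hlip ⟨γ 0, hpZ⟩ ⟨s, hsZ⟩
      rw [show ((↑(⟨s, hsZ⟩ : ↥(insert s P)) : X)) = s from rfl] at this
      rw [show ((↑(⟨γ 0, hpZ⟩ : ↥(insert s P)) : X)) = γ 0 from rfl] at this
      rw [dist_comm, hdsp] at this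
      linarith [hA, hB]
    refine ⟨((A + B - D) / 2, (A - B + D) / 2), ?_, ?_⟩
    · -- surroundedness
      rw [hH]
      refine ⟨?_, ?_, ?_, ?_⟩
      · -- upper-right : use attainment at s
        obtain ⟨w, hw⟩ := hatt ⟨s, hsZ⟩
        rw [show ((↑(⟨s, hsZ⟩ : ↥(insert s P)) : X)) = s from rfl] at hw
        rcases hmem ↑w w.2 with hws | ⟨t, ht, hwt⟩
        · have hwA : f w = A := by rw [hA]; congr 1; exact Subtype.ext hws
          have hds : dist s (↑w : X) = 0 := by rw [hws, dist_self]
          have hA0 : A = 0 := by rw [hds] at hw; linarith [hwA, hw]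
          refine ⟨φ s, ⟨s, hsZ, rfl⟩, ?_, ?_⟩ <;> rw [hφs]
          · show ((A + B - D) / 2, (A - B + D) / 2).1 ≤ (0:ℝ)
            show (A + B - D) / 2 ≤ (0:ℝ)
            linarith
          · show (A - B + D) / 2 ≤ (0:ℝ)
            linarith
        · have hw' : A + f w = dist (γ t) s := by
            rw [← hwt, dist_comm] at hw; linarith [hw, hA]
          have hl4 : B ≤ f w + t := by
            have := hlip ⟨γ 0, hpZ⟩ w
            rw [show ((↑(⟨γ 0, hpZ⟩ : ↥(insert s P)) : X)) = γ 0 from rfl, ← hwt,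
              hdistp t ht] at this
            linarith [hB]
          have hl3 : t ≤ f w + B := by
            have := hf1 w ⟨γ 0, hpZ⟩
            rw [show ((↑(⟨γ 0, hpZ⟩ : ↥(insert s P)) : X)) = γ 0 from rfl, ← hwt,
              dist_comm, hdistp t ht] at this
            linarith [hB]
          refine ⟨φ (γ t), ⟨γ t, hγmem t ht, rfl⟩, ?_, ?_⟩
          · show ((A + B - D) / 2, (A - B + D) / 2).1 ≤ (φ (γ t)).1
            rw [hφ1, hdistp t ht]
            show (A + B - D) / 2 ≤ (t + dist (γ t) s - D) / 2
            linarith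
          · show (A - B + D) / 2 ≤ (φ (γ t)).2
            rw [hφ2, hdistp t ht]
            show (A - B + D) / 2 ≤ (D - t + dist (γ t) s) / 2
            linarith
      · -- upper-left : γ 0
        refine ⟨φ (γ 0), ⟨γ 0, hpZ, rfl⟩, ?_, ?_⟩ <;> rw [hφp]
        · show (0:ℝ) ≤ (A + B - D) / 2
          linarith
        · show (A - B + D) / 2 ≤ D
          linarith
      · -- lower-right : use attainment at γ 0
        obtain ⟨w, hw⟩ := hatt ⟨γ 0, hpZ⟩
        rw [show ((↑(⟨γ 0, hpZ⟩ : ↥(insert s P)) : X)) = γ 0 from rfl] at hw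
        rcases hmem ↑w w.2 with hws | ⟨t, ht, hwt⟩
        · have hwA : f w = A := by rw [hA]; congr 1; exact Subtype.ext hws
          have hds : dist (γ 0) (↑w : X) = D := by rw [hws, ← hD]
          refine ⟨φ s, ⟨s, hsZ, rfl⟩, ?_, ?_⟩ <;> rw [hφs]
          · show (A + B - D) / 2 ≤ (0:ℝ)
            rw [hds] at hw
            linarith [hwA, hw, hB]
          · show (0:ℝ) ≤ (A - B + D) / 2
            linarith
        · have hw' : B + f w = t := by
            rw [← hwt, hdistp t ht] at hw; linarith [hw, hB]
          have hl2 : A ≤ f w + dist (γ t) s := by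
            have := hlip ⟨s, hsZ⟩ w
            rw [show ((↑(⟨s, hsZ⟩ : ↥(insert s P)) : X)) = s from rfl, ← hwt,
              dist_comm s (γ t)] at this
            linarith [hA]
          have hl1 : dist (γ t) s ≤ f w + A := by
            have := hf1 w ⟨s, hsZ⟩
            rw [show ((↑(⟨s, hsZ⟩ : ↥(insert s P)) : X)) = s from rfl, ← hwt] at this
            linarith [hA]
          refine ⟨φ (γ t), ⟨γ t, hγmem t ht, rfl⟩, ?_, ?_⟩
          · show (A + B - D) / 2 ≤ (φ (γ t)).1
            rw [hφ1, hdistp t ht]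
            show (A + B - D) / 2 ≤ (t + dist (γ t) s - D) / 2
            linarith
          · show (φ (γ t)).2 ≤ (A - B + D) / 2
            rw [hφ2, hdistp t ht]
            show (D - t + dist (γ t) s) / 2 ≤ (A - B + D) / 2
            linarith
      · -- lower-left : s
        refine ⟨φ s, ⟨s, hsZ, rfl⟩, ?_, ?_⟩ <;> rw [hφs]
        · show (0:ℝ) ≤ (A + B - D) / 2
          linarith
        · show (0:ℝ) ≤ (A - B + D) / 2
          linarith
    · -- the function equals f
      funext w
      show d1 ((A + B - D) / 2, (A - B + D) / 2) (φ ↑w) = f w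
      have halg : d1 ((A + B - D) / 2, (A - B + D) / 2) (φ ↑w) =
          max |A - dist (↑w : X) s| |B - dist (γ 0) ↑w| := by
        rw [d1, hφ1, hφ2]
        rw [show ((A + B - D) / 2, (A - B + D) / 2).1 -
            (dist (γ 0) (↑w : X) + dist (↑w : X) s - D) / 2 =
            ((A - dist (↑w : X) s) + (B - dist (γ 0) (↑w : X))) / 2 by
          show (A + B - D) / 2 - _ = _; ring]
        rw [show ((A + B - D) / 2, (A - B + D) / 2).2 -
            (D - dist (γ 0) (↑w : X) + dist (↑w : X) s) / 2 =
            ((A - dist (↑w : X) s) - (B - dist (γ 0) (↑w : X))) / 2 by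
          show (A - B + D) / 2 - _ = _; ring]
        exact abs_half_max _ _
      rw [halg]
      have l1 : dist (↑w : X) s ≤ f w + A := by
        have := hf1 w ⟨s, hsZ⟩
        rw [show ((↑(⟨s, hsZ⟩ : ↥(insert s P)) : X)) = s from rfl] at this
        linarith [hA]
      have l2 : A ≤ f w + dist (↑w : X) s := by
        have := hlip ⟨s, hsZ⟩ w
        rw [show ((↑(⟨s, hsZ⟩ : ↥(insert s P)) : X)) = s from rfl,
          dist_comm s (↑w : X)] at this
        linarith [hA]
      have l3 : dist (γ 0) (↑w : X) ≤ f w + B := by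
        have := hf1 w ⟨γ 0, hpZ⟩
        rw [show ((↑(⟨γ 0, hpZ⟩ : ↥(insert s P)) : X)) = γ 0 from rfl,
          dist_comm (↑w : X) (γ 0)] at this
        linarith [hB]
      have l4 : B ≤ f w + dist (γ 0) (↑w : X) := by
        have := hlip ⟨γ 0, hpZ⟩ w
        rw [show ((↑(⟨γ 0, hpZ⟩ : ↥(insert s P)) : X)) = γ 0 from rfl] at this
        linarith [hB]
      refine le_antisymm ?_ ?_
      · refine max_le (abs_le.mpr ⟨by linarith, by linarith⟩)
          (abs_le.mpr ⟨by linarith, by linarith⟩)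
      · obtain ⟨w', hw'⟩ := hatt w
        rcases hmem ↑w w.2 with hxs | ⟨t, ht, hxt⟩
        · -- w = s
          have hwA : f w = A := by rw [hA]; congr 1; exact Subtype.ext hxs
          refine le_trans ?_ (le_max_left _ _)
          rw [hwA, hxs, dist_self, sub_zero]
          exact le_abs_self _
        · rcases hmem ↑w' w'.2 with hws | ⟨t', ht', hwt⟩
          · -- w' = s
            have hwA : f w' = A := by rw [hA]; congr 1; exact Subtype.ext hws
            have : f w = dist (↑w : X) s - A := by
              rw [hws] at hw'; linarith [hw', hwA]
            refine le_trans ?_ (le_max_left _ _)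
            rw [this, abs_sub_comm]
            exact le_abs_self _
          · -- both on path
            have hdp : dist (γ 0) (↑w : X) = t := by rw [← hxt]; exact hdistp t ht
            have hdww' : dist (↑w : X) ↑w' = |t - t'| := by
              rw [← hxt, ← hwt]; exact hγ t ht t' ht'
            have l4' : B ≤ f w' + t' := by
              have := hlip ⟨γ 0, hpZ⟩ w'
              rw [show ((↑(⟨γ 0, hpZ⟩ : ↥(insert s P)) : X)) = γ 0 from rfl, ← hwt,
                hdistp t' ht'] at this
              linarith [hB]
            have l3' : t' ≤ f w' + B := by
              have := hf1 w' ⟨γ 0, hpZ⟩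
              rw [show ((↑(⟨γ 0, hpZ⟩ : ↥(insert s P)) : X)) = γ 0 from rfl, ← hwt,
                dist_comm, hdistp t' ht'] at this
              linarith [hB]
            refine le_trans ?_ (le_max_right _ _)
            rw [hdp]
            have hfw : f w = |t - t'| - f w' := by rw [hdww'] at hw'; linarith [hw']
            rcases le_total t' t with hc | hc
            · rw [abs_of_nonneg (by linarith : (0:ℝ) ≤ t - t')] at hfw
              rw [abs_sub_comm]
              refine le_trans (by linarith : f w ≤ t - B) (le_abs_self _)
            · rw [abs_of_nonpos (by linarith : t - t' ≤ 0)] at hfw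
              refine le_trans (by linarith : f w ≤ B - t) (le_abs_self _)
  -- Part 2b : injectivity
  have hinj : Set.InjOn (fun h => fun w : ↥(insert s P) => d1 h (φ ↑w)) H := by
    intro h hh h' hh' heq
    obtain ⟨hb1, hb2, hb3⟩ := hbd h (by rw [hH] at hh; exact hh)
    obtain ⟨hb1', hb2', hb3'⟩ := hbd h' (by rw [hH] at hh'; exact hh')
    have e1 : d1 h (φ s) = d1 h' (φ s) := congrFun heq ⟨s, hsZ⟩
    have e2 : d1 h (φ (γ 0)) = d1 h' (φ (γ 0)) := congrFun heq ⟨γ 0, hpZ⟩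
    rw [hφs, d1, d1] at e1
    rw [hφp, d1, d1] at e2
    simp only [sub_zero] at e1 e2
    rw [abs_of_nonneg hb1, abs_of_nonneg hb2, abs_of_nonneg hb1', abs_of_nonneg hb2'] at e1
    rw [abs_of_nonneg hb1, abs_of_nonneg hb1',
      abs_of_nonpos (by linarith : h.2 - D ≤ 0),
      abs_of_nonpos (by linarith : h'.2 - D ≤ 0)] at e2
    exact Prod.ext_iff.mpr ⟨by linarith, by linarith⟩
  -- Part 3 : isometry
  have hpart3 : ∀ h ∈ H, ∀ h' ∈ H,
      d1 h h' = ⨆ w : ↥(insert s P), |d1 h (φ ↑w) - d1 h' (φ ↑w)| := by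
    intro h hh h' hh'
    have ub : ∀ w : ↥(insert s P), |d1 h (φ ↑w) - d1 h' (φ ↑w)| ≤ d1 h h' := by
      intro w
      have a1 := abs_abs_sub_abs_le_abs_sub (h.1 - (φ (↑w : X)).1) (h'.1 - (φ (↑w : X)).1)
      have a2 := abs_abs_sub_abs_le_abs_sub (h.2 - (φ (↑w : X)).2) (h'.2 - (φ (↑w : X)).2)
      rw [show (h.1 - (φ (↑w : X)).1) - (h'.1 - (φ (↑w : X)).1) = h.1 - h'.1 by ring] at a1
      rw [show (h.2 - (φ (↑w : X)).2) - (h'.2 - (φ (↑w : X)).2) = h.2 - h'.2 by ring] at a2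
      rw [d1, d1, d1]
      rw [show (|h.1 - (φ (↑w : X)).1| + |h.2 - (φ (↑w : X)).2|) -
          (|h'.1 - (φ (↑w : X)).1| + |h'.2 - (φ (↑w : X)).2|) =
          (|h.1 - (φ (↑w : X)).1| - |h'.1 - (φ (↑w : X)).1|) +
          (|h.2 - (φ (↑w : X)).2| - |h'.2 - (φ (↑w : X)).2|) by ring]
      refine le_trans (abs_add_le _ _) ?_
      linarith
    obtain ⟨w0, hw0⟩ :
        ∃ w0 : ↥(insert s P), |d1 h (φ ↑w0) - d1 h' (φ ↑w0)| = d1 h h' := by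
      have hh'' : Surrounded h' (φ '' insert s P) := by rw [hH] at hh'; exact hh'
      obtain ⟨c1, c2, c3, c4⟩ := hh''
      rcases le_total h.1 h'.1 with hc1 | hc1 <;> rcases le_total h.2 h'.2 with hc2 | hc2
      · obtain ⟨z, ⟨r, hr, rfl⟩, hzx, hzy⟩ := c1
        refine ⟨⟨r, hr⟩, ?_⟩
        show |d1 h (φ r) - d1 h' (φ r)| = d1 h h'
        rw [d1, d1, d1,
          abs_of_nonpos (by linarith : h.1 - (φ r).1 ≤ 0),
          abs_of_nonpos (by linarith : h.2 - (φ r).2 ≤ 0),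
          abs_of_nonpos (by linarith : h'.1 - (φ r).1 ≤ 0),
          abs_of_nonpos (by linarith : h'.2 - (φ r).2 ≤ 0),
          abs_of_nonpos (by linarith : h.1 - h'.1 ≤ 0),
          abs_of_nonpos (by linarith : h.2 - h'.2 ≤ 0),
          abs_of_nonneg (by linarith)]
        ring
      · obtain ⟨z, ⟨r, hr, rfl⟩, hzx, hzy⟩ := c3
        refine ⟨⟨r, hr⟩, ?_⟩
        show |d1 h (φ r) - d1 h' (φ r)| = d1 h h'
        rw [d1, d1, d1,
          abs_of_nonpos (by linarith : h.1 - (φ r).1 ≤ 0),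
          abs_of_nonneg (by linarith : (0:ℝ) ≤ h.2 - (φ r).2),
          abs_of_nonpos (by linarith : h'.1 - (φ r).1 ≤ 0),
          abs_of_nonneg (by linarith : (0:ℝ) ≤ h'.2 - (φ r).2),
          abs_of_nonpos (by linarith : h.1 - h'.1 ≤ 0),
          abs_of_nonneg (by linarith : (0:ℝ) ≤ h.2 - h'.2),
          abs_of_nonneg (by linarith)]
        ring
      · obtain ⟨z, ⟨r, hr, rfl⟩, hzx, hzy⟩ := c2
        refine ⟨⟨r, hr⟩, ?_⟩
        show |d1 h (φ r) - d1 h' (φ r)| = d1 h h'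
        rw [d1, d1, d1,
          abs_of_nonneg (by linarith : (0:ℝ) ≤ h.1 - (φ r).1),
          abs_of_nonpos (by linarith : h.2 - (φ r).2 ≤ 0),
          abs_of_nonneg (by linarith : (0:ℝ) ≤ h'.1 - (φ r).1),
          abs_of_nonpos (by linarith : h'.2 - (φ r).2 ≤ 0),
          abs_of_nonneg (by linarith : (0:ℝ) ≤ h.1 - h'.1),
          abs_of_nonpos (by linarith : h.2 - h'.2 ≤ 0),
          abs_of_nonneg (by linarith)]
        ring
      · obtain ⟨z, ⟨r, hr, rfl⟩, hzx, hzy⟩ := c4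
        refine ⟨⟨r, hr⟩, ?_⟩
        show |d1 h (φ r) - d1 h' (φ r)| = d1 h h'
        rw [d1, d1, d1,
          abs_of_nonneg (by linarith : (0:ℝ) ≤ h.1 - (φ r).1),
          abs_of_nonneg (by linarith : (0:ℝ) ≤ h.2 - (φ r).2),
          abs_of_nonneg (by linarith : (0:ℝ) ≤ h'.1 - (φ r).1),
          abs_of_nonneg (by linarith : (0:ℝ) ≤ h'.2 - (φ r).2),
          abs_of_nonneg (by linarith : (0:ℝ) ≤ h.1 - h'.1),
          abs_of_nonneg (by linarith : (0:ℝ) ≤ h.2 - h'.2),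
          abs_of_nonneg (by linarith)]
        ring
    have hbdd : BddAbove (Set.range fun w : ↥(insert s P) =>
        |d1 h (φ ↑w) - d1 h' (φ ↑w)|) := ⟨d1 h h', by rintro v ⟨w, rfl⟩; exact ub w⟩
    refine le_antisymm ?_ (ciSup_le ub)
    calc d1 h h' = |d1 h (φ ↑w0) - d1 h' (φ ↑w0)| := hw0.symm
      _ ≤ ⨆ w : ↥(insert s P), |d1 h (φ ↑w) - d1 h' (φ ↑w)| := le_ciSup hbdd w0
  refine ⟨hconn, ⟨fun h hh => hmaps h hh, hinj, ?_⟩, hpart3⟩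
  intro f hf
  obtain ⟨hp, hhp, hEq⟩ := hsurj f hf
  exact ⟨hp, hhp, hEq⟩
end

section
/- Let (X,d) be a finite metric space, y ∈ X, Y = X \ {y} nonempty, and let Φ : T(Y) → T(X) be the canonical isometric embedding sending each f ∈ T(Y) to its unique extension in T(X). If t ∈ Φ(T(Y)) is a strong attachment point for y and t ≠ f_y (where f_y = d(y,·) ∈ T(X)), then t is a weak attachment point for y. -/
/-- `γ` is a geodesic from `a` to `b` inside the set `S` of functions `X → ℝ`
(with the sup metric): an isometric embedding of `[0, dist a b]` taking the
endpoints to `a` and `b`, with image contained in `S`. -/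
def IsGeodesicIn {X : Type*} [MetricSpace X] [Fintype X]
    (S : Set (X → ℝ)) (a b : X → ℝ) (γ : ℝ → X → ℝ) : Prop :=
  (∀ t ∈ Set.Icc 0 (dist a b), γ t ∈ S) ∧ γ 0 = a ∧ γ (dist a b) = b ∧
  ∀ t ∈ Set.Icc 0 (dist a b), ∀ t' ∈ Set.Icc 0 (dist a b),
    dist (γ t) (γ t') = |t - t'|

/-- `t` is a weak attachment point for `y`: it lies in the image `Φ(T(Y))` of the
canonical embedding and every neighborhood of it contains a point of `T(X) \ Φ(T(Y))`. -/
def WeakAttach {X : Type*} [MetricSpace X] [Fintype X] (y : X) (t : X → ℝ) : Prop :=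
  t ∈ extFun y '' TightSpan {x : X // x ≠ y} ∧
  t ∈ closure (TightSpan X \ extFun y '' TightSpan {x : X // x ≠ y})

/-- `t` is a strong attachment point for `y`: it lies in `Φ(T(Y))` and no geodesic in
`T(X)` from `t` to `f_y = d(y,·)` contains a point of `Φ(T(Y))` other than `t`. -/
def StrongAttach {X : Type*} [MetricSpace X] [Fintype X] (y : X) (t : X → ℝ) : Prop :=
  t ∈ extFun y '' TightSpan {x : X // x ≠ y} ∧
  ∀ γ : ℝ → X → ℝ, IsGeodesicIn (TightSpan X) t (fun w => dist y w) γ →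
    ∀ u ∈ Set.Icc 0 (dist t (fun w => dist y w)),
      γ u ∈ extFun y '' TightSpan {x : X // x ≠ y} → γ u = t

/-! ### Auxiliary theory -/

section Aux
variable {X : Type*} [MetricSpace X]

/-- admissible function -/
def AdmF (c : X → ℝ) : Prop := ∀ x z, dist x z ≤ c x + c z

/-- minimality (tightness) of an admissible function at `w` -/
def MinAtF (c : X → ℝ) (w : X) : Prop := ∃ z, c w + c z ≤ dist w z

lemma AdmF.nonneg {c : X → ℝ} (h : AdmF c) (x : X) : 0 ≤ c x := by
  have := h x x; simp at this; linarith

lemma minAtF_mono {c c' : X → ℝ} (hle : ∀ x, c' x ≤ c x) {w : X}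
    (h : MinAtF c w) : MinAtF c' w := by
  obtain ⟨z, hz⟩ := h
  exact ⟨z, by have := hle w; have := hle z; linarith⟩

lemma tightSpan_iff' [Finite X] [Nonempty X] (f : X → ℝ) :
    f ∈ TightSpan X ↔ AdmF f ∧ ∀ x, MinAtF f x := by
  constructor
  · rintro ⟨h1, h2⟩
    refine ⟨h1, fun x => ?_⟩
    obtain ⟨z, hz⟩ := Finite.exists_min (fun z => f x + f z - dist x z)
    have hb : BddBelow (Set.range fun z => f x + f z - dist x z) :=
      (Set.finite_range _).bddBelow
    have h3 : (⨅ z, (f x + f z - dist x z)) = f x + f z - dist x z :=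
      le_antisymm (ciInf_le hb z) (le_ciInf hz)
    refine ⟨z, ?_⟩
    rw [h2 x] at h3; linarith
  · rintro ⟨h1, h2⟩
    refine ⟨h1, fun x => ?_⟩
    obtain ⟨z, hz⟩ := h2 x
    have hb : BddBelow (Set.range fun z => f x + f z - dist x z) :=
      (Set.finite_range _).bddBelow
    refine le_antisymm (le_trans (ciInf_le hb z) (by linarith)) ?_
    exact le_ciInf fun z => by have := h1 x z; linarith

/-- The canonical extension of a tight-span element of `Y = X \ {y}` is
admissible and everywhere minimal. -/
lemma extFun_props [Finite X] (y : X) [Nonempty {x : X // x ≠ y}]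
    {f : {x : X // x ≠ y} → ℝ} (hf : f ∈ TightSpan {x : X // x ≠ y}) :
    AdmF (extFun y f) ∧ ∀ x, MinAtF (extFun y f) x := by
  obtain ⟨hfA, hfM⟩ := (tightSpan_iff' f).1 hf
  set g := extFun y f with hg
  have hgx : ∀ (x : X) (hx : x ≠ y), g x = f ⟨x, hx⟩ := by
    intro x hx; simp [hg, extFun, hx]
  have hb : BddAbove (Set.range fun x' : {x : X // x ≠ y} => dist (x' : X) y - f x') :=
    (Set.finite_range _).bddAbove
  obtain ⟨x0, hx0⟩ := Finite.exists_max (fun x' : {x : X // x ≠ y} => dist (x' : X) y - f x')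
  have hgyS : g y = ⨆ x' : {x : X // x ≠ y}, (dist (x' : X) y - f x') := by
    simp [hg, extFun]
  have hgy : g y = dist (x0 : X) y - f x0 := by
    rw [hgyS]
    exact le_antisymm (ciSup_le hx0) (le_ciSup hb x0)
  have hgyge : ∀ x' : {x : X // x ≠ y}, dist (x' : X) y - f x' ≤ g y := by
    intro x'; rw [hgyS]; exact le_ciSup hb x'
  have hgy0 : 0 ≤ g y := by
    obtain ⟨x1⟩ := (inferInstance : Nonempty {x : X // x ≠ y})
    obtain ⟨z1, hz1⟩ := hfM x1
    have hd : dist x1 z1 = dist (x1 : X) (z1 : X) := Subtype.dist_eq x1 z1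
    have htri : dist (x1 : X) (z1 : X) ≤ dist (x1 : X) y + dist y (z1 : X) :=
      dist_triangle _ _ _
    have hor : f x1 ≤ dist (x1 : X) y ∨ f z1 ≤ dist (z1 : X) y := by
      by_contra hcon
      push_neg at hcon
      have := dist_comm y (z1 : X)
      linarith [hcon.1, hcon.2]
    rcases hor with h | h
    · have := hgyge x1; linarith
    · have := hgyge z1; linarith
  have key : ∀ (x : X) (hx : x ≠ y), dist x y ≤ g x + g y := by
    intro x hx
    have := hgyge ⟨x, hx⟩
    rw [hgx x hx]
    simp only at this
    linarith
  constructor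
  · intro x z
    by_cases hx : x = y
    · subst hx
      by_cases hz : z = x
      · subst hz; simp; linarith
      · rw [dist_comm, add_comm]; exact key z hz
    · by_cases hz : z = y
      · subst hz; exact key x hx
      · rw [hgx x hx, hgx z hz]
        have := hfA ⟨x, hx⟩ ⟨z, hz⟩
        rwa [Subtype.dist_eq] at this
  · intro x
    by_cases hx : x = y
    · rw [hx]
      refine ⟨(x0 : X), ?_⟩
      rw [hgx _ x0.2, hgy]
      have : (⟨(x0 : X), x0.2⟩ : {x : X // x ≠ y}) = x0 := Subtype.eta _ _
      rw [this, dist_comm]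
      linarith
    · obtain ⟨z1, hz1⟩ := hfM ⟨x, hx⟩
      refine ⟨(z1 : X), ?_⟩
      rw [hgx x hx, hgx _ z1.2]
      have he : (⟨(z1 : X), z1.2⟩ : {x : X // x ≠ y}) = z1 := Subtype.eta _ _
      rw [he]
      rwa [Subtype.dist_eq] at hz1

/-- An admissible, everywhere minimal function vanishing at `y` is `dist y ·`. -/
lemma eq_fy_of_zero {y : X} {g : X → ℝ} (hA : AdmF g) (hM : ∀ x, MinAtF g x)
    (h0 : g y = 0) : g = fun w => dist y w := by
  funext x
  have h1 : dist y x ≤ g x := by have := hA x y; rw [dist_comm]; linarith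
  have h2 : g x ≤ dist y x := by
    obtain ⟨z, hz⟩ := hM x
    have htri : dist x z ≤ dist x y + dist y z := dist_triangle _ _ _
    have := hA y z
    rw [dist_comm x y] at htri
    linarith
  linarith

end Aux

section Pass
variable {X : Type*} [MetricSpace X] [Fintype X]

open Classical in
noncomputable def stepF [Nonempty X] (w : X) (c : X → ℝ) : X → ℝ :=
  fun x => if x = w then
    max (Finset.univ.sup' Finset.univ_nonempty (fun z => dist w z - c z)) 0
  else c x

lemma stepF_apply_ne [Nonempty X] (w : X) (c : X → ℝ) {x : X} (h : x ≠ w) :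
    stepF w c x = c x := by simp [stepF, h]

lemma stepF_apply_self [Nonempty X] (w : X) (c : X → ℝ) :
    stepF w c w =
      max (Finset.univ.sup' Finset.univ_nonempty (fun z => dist w z - c z)) 0 := by
  simp [stepF]

lemma stepF_le [Nonempty X] {c : X → ℝ} (h : AdmF c) (w x : X) :
    stepF w c x ≤ c x := by
  rcases eq_or_ne x w with rfl | hx
  · rw [stepF_apply_self]
    refine max_le (Finset.sup'_le _ _ fun z _ => ?_) (h.nonneg x)
    have := h x z; linarith
  · rw [stepF_apply_ne _ _ hx]

lemma stepF_adm [Nonempty X] {c : X → ℝ} (h : AdmF c) (w : X) :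
    AdmF (stepF w c) := by
  have key : ∀ z : X, z ≠ w → dist w z ≤ stepF w c w + c z := by
    intro z hz
    rw [stepF_apply_self]
    have h1 : dist w z - c z ≤ Finset.univ.sup' Finset.univ_nonempty (fun u => dist w u - c u) :=
      Finset.le_sup' (f := fun u => dist w u - c u) (Finset.mem_univ z)
    have h2 := le_max_left (Finset.univ.sup' Finset.univ_nonempty (fun u => dist w u - c u)) (0:ℝ)
    linarith
  intro x z
  rcases eq_or_ne x w with rfl | hx
  · rcases eq_or_ne z x with rfl | hz
    · have h0 : (0:ℝ) ≤ stepF z c z := by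
        rw [stepF_apply_self]; exact le_max_right _ _
      simp; linarith
    · rw [stepF_apply_ne _ _ hz]; exact key z hz
  · rcases eq_or_ne z w with rfl | hz
    · rw [stepF_apply_ne _ _ hx, dist_comm, add_comm]
      exact key x hx
    · rw [stepF_apply_ne _ _ hx, stepF_apply_ne _ _ hz]; exact h x z

lemma stepF_minAt [Nonempty X] {c : X → ℝ} (h : AdmF c) (w : X) :
    MinAtF (stepF w c) w := by
  obtain ⟨z0, _, hz0⟩ := Finset.exists_mem_eq_sup' (Finset.univ_nonempty (α := X))
    (fun z => dist w z - c z)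
  rcases le_or_gt (dist w z0 - c z0) 0 with hM0 | hM0
  · refine ⟨w, ?_⟩
    rw [stepF_apply_self, hz0, max_eq_right hM0]
    simp
  · have hz0w : z0 ≠ w := by
      rintro rfl
      have := h.nonneg z0; simp at hM0; linarith
    refine ⟨z0, ?_⟩
    rw [stepF_apply_self, hz0, max_eq_left hM0.le, stepF_apply_ne _ _ hz0w]
    linarith

lemma stepF_fix [Nonempty X] {c : X → ℝ} (h : AdmF c) {w : X} (hm : MinAtF c w) :
    stepF w c = c := by
  funext x
  rcases eq_or_ne x w with rfl | hx
  · rw [stepF_apply_self]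
    obtain ⟨z, hz⟩ := hm
    have h1 : c x ≤ Finset.univ.sup' Finset.univ_nonempty (fun z => dist x z - c z) :=
      le_trans (by linarith) (Finset.le_sup' (f := fun z => dist x z - c z) (Finset.mem_univ z))
    have h2 : Finset.univ.sup' Finset.univ_nonempty (fun z => dist x z - c z) ≤ c x :=
      Finset.sup'_le _ _ fun z _ => by have := h x z; linarith
    have h0 := h.nonneg x
    rw [max_eq_left (le_trans h0 h1)]
    linarith
  · exact stepF_apply_ne _ _ hx

lemma stepF_nonexp [Nonempty X] (w : X) (c c' : X → ℝ) :
    dist (stepF w c) (stepF w c') ≤ dist c c' := by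
  refine (dist_pi_le_iff dist_nonneg).2 fun x => ?_
  rcases eq_or_ne x w with rfl | hx
  · rw [stepF_apply_self, stepF_apply_self, Real.dist_eq]
    refine le_trans (abs_max_sub_max_le_abs _ _ 0) ?_
    rw [abs_sub_le_iff]
    constructor
    · refine sub_le_iff_le_add.2 (Finset.sup'_le _ _ fun z _ => ?_)
      have h1 : dist x z - c' z ≤ Finset.univ.sup' Finset.univ_nonempty (fun z => dist x z - c' z) :=
        Finset.le_sup' (f := fun z => dist x z - c' z) (Finset.mem_univ z)
      have h2 : dist (c z) (c' z) ≤ dist c c' := dist_le_pi_dist c c' z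
      rw [Real.dist_eq, abs_sub_le_iff] at h2
      linarith [h2.2]
    · refine sub_le_iff_le_add.2 (Finset.sup'_le _ _ fun z _ => ?_)
      have h1 : dist x z - c z ≤ Finset.univ.sup' Finset.univ_nonempty (fun z => dist x z - c z) :=
        Finset.le_sup' (f := fun z => dist x z - c z) (Finset.mem_univ z)
      have h2 : dist (c z) (c' z) ≤ dist c c' := dist_le_pi_dist c c' z
      rw [Real.dist_eq, abs_sub_le_iff] at h2
      linarith [h2.1]
  · rw [stepF_apply_ne _ _ hx, stepF_apply_ne _ _ hx]
    exact dist_le_pi_dist c c' x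

/-- Tightening pass along a list of coordinates. -/
noncomputable def passF [Nonempty X] : List X → (X → ℝ) → (X → ℝ)
  | [], c => c
  | w :: l, c => passF l (stepF w c)

lemma passF_le [Nonempty X] : ∀ (l : List X) {c : X → ℝ}, AdmF c →
    ∀ x, passF l c x ≤ c x
  | [], _, _, _ => le_rfl
  | w :: l, _, h, x =>
    le_trans (passF_le l (stepF_adm h w) x) (stepF_le h w x)

lemma passF_adm [Nonempty X] : ∀ (l : List X) {c : X → ℝ}, AdmF c →
    AdmF (passF l c)
  | [], _, h => h
  | w :: l, _, h => passF_adm l (stepF_adm h w)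

lemma passF_minAt [Nonempty X] : ∀ (l : List X) {c : X → ℝ}, AdmF c →
    ∀ w ∈ l, MinAtF (passF l c) w := by
  intro l
  induction l with
  | nil => intro c h w hw; simp at hw
  | cons a l ih =>
    intro c h w hw
    rcases List.mem_cons.1 hw with rfl | hw
    · exact minAtF_mono (passF_le l (stepF_adm h w)) (stepF_minAt h w)
    · exact ih (stepF_adm h a) w hw

lemma passF_fix [Nonempty X] : ∀ (l : List X) {c : X → ℝ}, AdmF c →
    (∀ w, MinAtF c w) → passF l c = c
  | [], _, _, _ => rfl
  | w :: l, c, h, hm => by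
    show passF l (stepF w c) = c
    rw [stepF_fix h (hm w)]
    exact passF_fix l h hm

lemma passF_nonexp [Nonempty X] : ∀ (l : List X) (c c' : X → ℝ),
    dist (passF l c) (passF l c') ≤ dist c c'
  | [], _, _ => le_rfl
  | w :: l, c, c' =>
    le_trans (passF_nonexp l (stepF w c) (stepF w c')) (stepF_nonexp w c c')

open Classical in
noncomputable def hSfun (y : X) (t : X → ℝ) (s : ℝ) : X → ℝ :=
  fun x => if x = y then t y - s else t x + s

lemma hSfun_self (y : X) (t : X → ℝ) (s : ℝ) : hSfun y t s y = t y - s := by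
  simp [hSfun]

lemma hSfun_ne (y : X) (t : X → ℝ) (s : ℝ) {x : X} (hx : x ≠ y) :
    hSfun y t s x = t x + s := by simp [hSfun, hx]

end Pass

theorem stmt10 {X : Type*} [MetricSpace X] [Fintype X] (y : X)
    [Nonempty {x : X // x ≠ y}] (t : X → ℝ)
    (hstrong : StrongAttach y t) (hne : t ≠ fun w => dist y w) :
    WeakAttach y t := by
  haveI : Nonempty X := ⟨y⟩
  obtain ⟨f, hfT, hft⟩ := hstrong.1
  have hts := extFun_props y hfT
  rw [hft] at hts
  obtain ⟨htA, htM⟩ := hts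
  have hty0 : 0 ≤ t y := htA.nonneg y
  have htypos : 0 < t y := by
    rcases eq_or_lt_of_le hty0 with h | h
    · exact absurd (eq_fy_of_zero htA htM h.symm) hne
    · exact h
  -- the distance from t to f_y is t y
  have hdist : dist t (fun w => dist y w) = t y := by
    refine le_antisymm ((dist_pi_le_iff hty0).2 fun x => ?_) ?_
    · rw [Real.dist_eq, abs_sub_le_iff]
      constructor
      · obtain ⟨z, hz⟩ := htM x
        have h1 : dist x z ≤ dist x y + dist y z := dist_triangle _ _ _
        have h2 := htA y z
        have h3 := dist_comm x y
        linarith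
      · have := htA y x
        linarith
    · have h := dist_le_pi_dist t (fun w => dist y w) y
      rw [Real.dist_eq] at h
      simp only [dist_self] at h
      rw [abs_of_nonneg (by linarith : (0:ℝ) ≤ t y - 0)] at h
      linarith
  -- the path
  set L := (Finset.univ : Finset X).toList with hL
  set γ : ℝ → X → ℝ := fun s => passF L (hSfun y t s) with hγ
  have hγapp : ∀ s, γ s = passF L (hSfun y t s) := fun s => by rw [hγ]
  have hadm : ∀ s ∈ Set.Icc (0:ℝ) (t y), AdmF (hSfun y t s) := by
    rintro s ⟨hs0, hsF⟩ x z
    by_cases hx : x = y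
    · by_cases hz : z = y
      · rw [hx, hz, hSfun_self]
        simp only [dist_self]
        linarith
      · rw [hx, hSfun_self, hSfun_ne _ _ _ hz]
        have := htA y z
        linarith
    · by_cases hz : z = y
      · rw [hz, hSfun_self, hSfun_ne _ _ _ hx]
        have := htA x y
        linarith
      · rw [hSfun_ne _ _ _ hx, hSfun_ne _ _ _ hz]
        have := htA x z
        linarith
  have hmemL : ∀ w : X, w ∈ L := fun w => by
    rw [hL]; exact Finset.mem_toList.2 (Finset.mem_univ w)
  have hmemTS : ∀ s ∈ Set.Icc (0:ℝ) (t y), γ s ∈ TightSpan X := by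
    intro s hs
    rw [hγapp s, tightSpan_iff']
    exact ⟨passF_adm L (hadm s hs), fun w => passF_minAt L (hadm s hs) w (hmemL w)⟩
  have hγle : ∀ s ∈ Set.Icc (0:ℝ) (t y), ∀ x, γ s x ≤ hSfun y t s x := by
    intro s hs x
    rw [hγapp s]
    exact passF_le L (hadm s hs) x
  have hγy : ∀ s ∈ Set.Icc (0:ℝ) (t y), γ s y = t y - s := by
    intro s hs
    refine le_antisymm (le_trans (hγle s hs y) (le_of_eq (hSfun_self y t s))) ?_
    obtain ⟨z, hz⟩ := htM y
    have hzy : z ≠ y := by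
      rintro rfl
      simp only [dist_self] at hz
      linarith
    have h1 : dist y z ≤ γ s y + γ s z := by
      rw [hγapp s]; exact passF_adm L (hadm s hs) y z
    have h2 : γ s z ≤ t z + s :=
      le_trans (hγle s hs z) (le_of_eq (hSfun_ne y t s hzy))
    linarith
  have hγdist : ∀ s ∈ Set.Icc (0:ℝ) (t y), ∀ s' ∈ Set.Icc (0:ℝ) (t y),
      dist (γ s) (γ s') = |s - s'| := by
    intro s hs s' hs'
    refine le_antisymm ?_ ?_
    · rw [hγapp s, hγapp s']
      refine le_trans (passF_nonexp L _ _) ((dist_pi_le_iff (abs_nonneg _)).2 fun x => ?_)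
      by_cases hx : x = y
      · rw [hx, hSfun_self, hSfun_self, Real.dist_eq]
        have : (t y - s) - (t y - s') = -(s - s') := by ring
        rw [this, abs_neg]
      · rw [hSfun_ne _ _ _ hx, hSfun_ne _ _ _ hx, Real.dist_eq]
        have : (t x + s) - (t x + s') = s - s' := by ring
        rw [this]
    · have h := dist_le_pi_dist (γ s) (γ s') y
      rw [hγy s hs, hγy s' hs', Real.dist_eq] at h
      have : (t y - s) - (t y - s') = -(s - s') := by ring
      rw [this, abs_neg] at h
      exact h
  have hγ0 : γ 0 = t := by
    have h0 : hSfun y t 0 = t := by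
      funext x
      by_cases hx : x = y
      · rw [hx, hSfun_self]; ring
      · rw [hSfun_ne _ _ _ hx]; ring
    rw [hγapp 0, h0]
    exact passF_fix L htA htM
  have hγF : γ (t y) = fun w => dist y w := by
    have hFmem : t y ∈ Set.Icc (0:ℝ) (t y) := ⟨hty0, le_rfl⟩
    obtain ⟨hA', hM'⟩ := (tightSpan_iff' _).1 (hmemTS (t y) hFmem)
    refine eq_fy_of_zero hA' hM' ?_
    rw [hγy (t y) hFmem]; ring
  have hgeo : IsGeodesicIn (TightSpan X) t (fun w => dist y w) γ := by
    rw [IsGeodesicIn, hdist]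
    exact ⟨hmemTS, hγ0, hγF, hγdist⟩
  refine ⟨hstrong.1, ?_⟩
  rw [Metric.mem_closure_iff]
  intro ε hε
  set u := min (ε/2) (t y) with hu
  have hu0 : 0 < u := lt_min (by linarith) htypos
  have huF : u ≤ t y := min_le_right _ _
  have humem : u ∈ Set.Icc (0:ℝ) (t y) := ⟨hu0.le, huF⟩
  have h0mem : (0:ℝ) ∈ Set.Icc (0:ℝ) (t y) := ⟨le_rfl, hty0⟩
  have hdtu : dist t (γ u) = u := by
    have hd := hγdist 0 h0mem u humem
    rw [hγ0] at hd
    rw [hd, zero_sub, abs_neg, abs_of_pos hu0]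
  refine ⟨γ u, ⟨hmemTS u humem, ?_⟩, ?_⟩
  · intro himg
    have heq := hstrong.2 γ hgeo u (by rw [hdist]; exact humem) himg
    rw [heq] at hdtu
    simp only [dist_self] at hdtu
    linarith
  · rw [hdtu]
    exact lt_of_le_of_lt (min_le_left _ _) (by linarith)
end

section
/- Let (Z,d) be a metric space and let A, B be subsets of Z with A ∪ B = Z and A ∩ B = {p} for some point p, such that d(a,b) = d(a,p) + d(p,b) for all a ∈ A and b ∈ B. If A and B, each with the metric restricted from Z, are hyperconvex, then Z is hyperconvex. -/
universe u

/-- A subset `S` of a metric space, with the restricted metric, is hyperconvex if for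
every family of points of `S` and nonnegative radii with `dist (x i) (x j) ≤ r i + r j`
for all `i, j`, the closed balls `B̄(x i, r i)` have a common point in `S`. -/
def HyperconvexOn {Z : Type u} [MetricSpace Z] (S : Set Z) : Prop :=
  ∀ (ι : Type u) (x : ι → Z), (∀ i, x i ∈ S) → ∀ r : ι → ℝ, (∀ i, 0 ≤ r i) →
    (∀ i j, dist (x i) (x j) ≤ r i + r j) → ∃ z ∈ S, ∀ i, dist z (x i) ≤ r i

lemma aux14 {Z : Type u} [MetricSpace Z] (A B : Set Z) (p : Z) (hpA : p ∈ A)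
    (hd : ∀ a ∈ A, ∀ b ∈ B, dist a b = dist a p + dist p b)
    (hA : HyperconvexOn A) (ι : Type u) (x : ι → Z)
    (hx : ∀ i, x i ∈ A ∨ x i ∈ B) (r : ι → ℝ) (hr : ∀ i, 0 ≤ r i)
    (hsep : ∀ i j, dist (x i) (x j) ≤ r i + r j)
    (hcase : ∀ i, x i ∉ A → dist p (x i) ≤ r i) :
    ∃ z, ∀ i, dist z (x i) ≤ r i := by
  classical
  set y : ι → Z := fun i => if x i ∈ A then x i else p with hy
  set s : ι → ℝ := fun i => if x i ∈ A then r i else r i - dist p (x i) with hs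
  have hxB : ∀ i, x i ∉ A → x i ∈ B := fun i h => (hx i).resolve_left h
  obtain ⟨z, hzA, hz⟩ := hA ι y
    (fun i => by by_cases h : x i ∈ A <;> simp [hy, h, hpA]) s
    (fun i => by
      by_cases h : x i ∈ A
      · simp [hs, h, hr i]
      · simp only [hs, h, if_false]
        linarith [hcase i h])
    (fun i j => by
      by_cases hi : x i ∈ A <;> by_cases hj : x j ∈ A <;>
        simp only [hy, hs, hi, hj, if_true, if_false]
      · exact hsep i j
      · have := hd (x i) hi (x j) (hxB j hj)
        have := hsep i j
        linarith
      · have h1 := hd (x j) hj (x i) (hxB i hi)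
        have h2 := hsep j i
        rw [dist_comm p (x j)]
        linarith
      · simp only [dist_self]
        have := hcase i hi
        have := hcase j hj
        linarith [hr i, hr j])
  refine ⟨z, fun i => ?_⟩
  by_cases h : x i ∈ A
  · simpa [hy, hs, h] using hz i
  · have h1 := hz i
    simp only [hy, hs, h, if_false] at h1
    have h2 := hd z hzA (x i) (hxB i h)
    linarith

theorem stmt14 {Z : Type u} [MetricSpace Z] (A B : Set Z) (p : Z)
    (hU : A ∪ B = Set.univ) (hI : A ∩ B = {p})
    (hd : ∀ a ∈ A, ∀ b ∈ B, dist a b = dist a p + dist p b)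
    (hA : HyperconvexOn A) (hB : HyperconvexOn B) :
    HyperconvexOn (Set.univ : Set Z) := by
  classical
  intro ι x _ r hr hsep
  have hp : p ∈ A ∩ B := hI ▸ rfl
  have hx : ∀ i, x i ∈ A ∨ x i ∈ B := fun i => by
    have : x i ∈ A ∪ B := hU ▸ Set.mem_univ _
    exact this
  have hd' : ∀ b ∈ B, ∀ a ∈ A, dist b a = dist b p + dist p a := fun b hb a ha => by
    rw [dist_comm b a, hd a ha b hb, dist_comm a p, dist_comm p b]; ring
  by_cases hc : ∀ i, x i ∉ A → dist p (x i) ≤ r i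
  · obtain ⟨z, hz⟩ := aux14 A B p hp.1 hd hA ι x hx r hr hsep hc
    exact ⟨z, trivial, hz⟩
  · push_neg at hc
    obtain ⟨i0, hi0A, hi0⟩ := hc
    have hi0B : x i0 ∈ B := (hx i0).resolve_left hi0A
    have hc' : ∀ i, x i ∉ B → dist p (x i) ≤ r i := by
      intro i hiB
      have hiA : x i ∈ A := (hx i).resolve_right hiB
      have h1 := hd (x i) hiA (x i0) hi0B
      have h2 := hsep i i0
      have : dist (x i) p ≤ r i + r i0 - dist p (x i0) := by linarith
      rw [dist_comm]
      linarith
    obtain ⟨z, hz⟩ := aux14 B A p hp.2 hd' hB ι x (fun i => (hx i).symm) r hr hsep hc'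
    exact ⟨z, trivial, hz⟩
end

section
/- Let (X,d) be a three-point metric space with X = {x, y, z}, and set a = (d(x,y) + d(x,z) − d(y,z))/2, b = (d(x,y) + d(y,z) − d(x,z))/2, c = (d(x,z) + d(y,z) − d(x,y))/2 (all nonnegative by the triangle inequality). Let K be the tripod {(t,0) : −b ≤ t ≤ a} ∪ {(0,t) : 0 ≤ t ≤ c} in the L1 plane, and define pos(x) = (a,0), pos(y) = (−b,0), pos(z) = (0,c), which are points of K whose pairwise d₁-distances equal the distances in (X,d). Then the map sending h ∈ K to the function w ↦ d₁(h, pos(w)) on X is a bijective isometry from K (with metric d₁) onto the tight span T(X). -/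
lemma iInf3 {X : Type*} (x y z : X) (hcover : ∀ w : X, w = x ∨ w = y ∨ w = z)
    (g : X → ℝ) : (⨅ w, g w) = min (g x) (min (g y) (g z)) := by
  have : Nonempty X := ⟨x⟩
  have hb : BddBelow (Set.range g) := by
    refine ⟨min (g x) (min (g y) (g z)), ?_⟩
    rintro v ⟨w, rfl⟩
    rcases hcover w with rfl|rfl|rfl
    · exact min_le_left _ _
    · exact le_trans (min_le_right _ _) (min_le_left _ _)
    · exact le_trans (min_le_right _ _) (min_le_right _ _)
  apply le_antisymm
  · exact le_min (ciInf_le hb x) (le_min (ciInf_le hb y) (ciInf_le hb z))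
  · refine le_ciInf fun w => ?_
    rcases hcover w with rfl|rfl|rfl
    · exact min_le_left _ _
    · exact le_trans (min_le_right _ _) (min_le_left _ _)
    · exact le_trans (min_le_right _ _) (min_le_right _ _)

lemma iSup3 {X : Type*} (x y z : X) (hcover : ∀ w : X, w = x ∨ w = y ∨ w = z)
    (g : X → ℝ) : (⨆ w, g w) = max (g x) (max (g y) (g z)) := by
  have : Nonempty X := ⟨x⟩
  have hb : BddAbove (Set.range g) := by
    refine ⟨max (g x) (max (g y) (g z)), ?_⟩
    rintro v ⟨w, rfl⟩
    rcases hcover w with rfl|rfl|rfl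
    · exact le_max_left _ _
    · exact le_trans (le_max_left _ _) (le_max_right _ _)
    · exact le_trans (le_max_right _ _) (le_max_right _ _)
  apply le_antisymm
  · refine ciSup_le fun w => ?_
    rcases hcover w with rfl|rfl|rfl
    · exact le_max_left _ _
    · exact le_trans (le_max_left _ _) (le_max_right _ _)
    · exact le_trans (le_max_right _ _) (le_max_right _ _)
  · exact max_le (le_ciSup hb x) (max_le (le_ciSup hb y) (le_ciSup hb z))

lemma d1_comm_s16 (p q : ℝ × ℝ) : d1 p q = d1 q p := by
  simp [d1, abs_sub_comm]

lemma d1_triangle (p q r : ℝ × ℝ) : d1 p r ≤ d1 p q + d1 q r := by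
  simp only [d1]
  have h1 := abs_sub_le p.1 q.1 r.1
  have h2 := abs_sub_le p.2 q.2 r.2
  linarith

lemma min3_zero {A B C : ℝ} (h : min A (min B C) = 0) : A = 0 ∨ B = 0 ∨ C = 0 := by
  rcases min_choice A (min B C) with h1 | h1
  · left; rw [← h1]; exact h
  · rcases min_choice B C with h2 | h2
    · right; left; rw [← h2, ← h1]; exact h
    · right; right; rw [← h2, ← h1]; exact h

theorem stmt16 {X : Type*} [MetricSpace X] (x y z : X)
    (hxy : x ≠ y) (hxz : x ≠ z) (hyz : y ≠ z)
    (hcover : ∀ w : X, w = x ∨ w = y ∨ w = z)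
    (a b c : ℝ)
    (ha : a = (dist x y + dist x z - dist y z) / 2)
    (hb : b = (dist x y + dist y z - dist x z) / 2)
    (hc : c = (dist x z + dist y z - dist x y) / 2)
    (K : Set (ℝ × ℝ))
    (hK : K = {q | (q.2 = 0 ∧ -b ≤ q.1 ∧ q.1 ≤ a) ∨ (q.1 = 0 ∧ 0 ≤ q.2 ∧ q.2 ≤ c)})
    (pos : X → ℝ × ℝ)
    (hpx : pos x = (a, 0)) (hpy : pos y = (-b, 0)) (hpz : pos z = (0, c)) :
    (0 ≤ a ∧ 0 ≤ b ∧ 0 ≤ c) ∧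
    (∀ w : X, pos w ∈ K) ∧
    (∀ u v : X, d1 (pos u) (pos v) = dist u v) ∧
    Set.BijOn (fun h => fun w : X => d1 h (pos w)) K (TightSpan X) ∧
    ∀ h ∈ K, ∀ h' ∈ K, d1 h h' = ⨆ w : X, |d1 h (pos w) - d1 h' (pos w)| := by
  -- basic facts
  have t1 : dist y z ≤ dist x y + dist x z := by
    have := dist_triangle y x z; rwa [dist_comm y x] at this
  have t2 : dist x z ≤ dist x y + dist y z := dist_triangle x y z
  have t3 : dist x y ≤ dist x z + dist y z := by
    have := dist_triangle x z y; rwa [dist_comm z y] at this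
  have ha0 : 0 ≤ a := by rw [ha]; linarith
  have hb0 : 0 ≤ b := by rw [hb]; linarith
  have hc0 : 0 ≤ c := by rw [hc]; linarith
  have dxy : dist x y = a + b := by rw [ha, hb]; ring
  have dxz : dist x z = a + c := by rw [ha, hc]; ring
  have dyz : dist y z = b + c := by rw [hb, hc]; ring
  have dxy0 : 0 < dist x y := dist_pos.2 hxy
  -- computations of d1 to the marked points
  have Fx : ∀ h : ℝ × ℝ, d1 h (pos x) = |h.1 - a| + |h.2| := by
    intro h; simp [d1, hpx]
  have Fy : ∀ h : ℝ × ℝ, d1 h (pos y) = |h.1 + b| + |h.2| := by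
    intro h; simp [d1, hpy, sub_neg_eq_add]
  have Fz : ∀ h : ℝ × ℝ, d1 h (pos z) = |h.1| + |h.2 - c| := by
    intro h; simp [d1, hpz]
  have dyx : dist y x = a + b := by rw [dist_comm]; exact dxy
  have dzx : dist z x = a + c := by rw [dist_comm]; exact dxz
  have dzy : dist z y = b + c := by rw [dist_comm]; exact dyz
  -- part 2
  have memK : ∀ w : X, pos w ∈ K := by
    intro w; rw [hK]
    rcases hcover w with hw|hw|hw <;> rw [hw]
    · rw [hpx]; left; exact ⟨rfl, by simp; linarith, le_refl a⟩
    · rw [hpy]; left; exact ⟨rfl, le_refl _, by simp; linarith⟩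
    · rw [hpz]; right; exact ⟨rfl, hc0, le_refl c⟩
  -- part 3
  have dposf : ∀ u v : X, d1 (pos u) (pos v) = dist u v := by
    intro u v
    rcases hcover u with hu|hu|hu <;> rcases hcover v with hv|hv|hv <;> rw [hu, hv]
    · rw [hpx, dist_self]; simp only [d1]; norm_num
    · rw [hpx, hpy, dxy]; simp only [d1]; norm_num; linarith
    · rw [hpx, hpz, dxz]; simp only [d1]; norm_num
      rw [abs_of_nonneg ha0, abs_of_nonneg hc0]
    · rw [hpx, hpy, dyx]; simp only [d1]; norm_num
      rw [abs_of_nonpos (by linarith)]; ring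
    · rw [hpy, dist_self]; simp only [d1]; norm_num
    · rw [hpy, hpz, dyz]; simp only [d1]; norm_num
      rw [abs_of_nonneg hb0, abs_of_nonneg hc0]
    · rw [hpx, hpz, dzx]; simp only [d1]; norm_num
      rw [abs_of_nonneg ha0, abs_of_nonneg hc0]
    · rw [hpy, hpz, dzy]; simp only [d1]; norm_num
      rw [abs_of_nonneg hb0, abs_of_nonneg hc0]
    · rw [hpz, dist_self]; simp only [d1]; norm_num
  -- evaluation lemmas
  have evalH : ∀ h : ℝ × ℝ, h.2 = 0 → -b ≤ h.1 → h.1 ≤ a →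
      d1 h (pos x) = a - h.1 ∧ d1 h (pos y) = h.1 + b ∧ d1 h (pos z) = |h.1| + c := by
    intro h h2 hl hr
    refine ⟨?_, ?_, ?_⟩
    · rw [Fx, h2, abs_zero, add_zero, abs_of_nonpos (by linarith)]; ring
    · rw [Fy, h2, abs_zero, add_zero, abs_of_nonneg (by linarith)]
    · rw [Fz, h2, zero_sub, abs_neg, abs_of_nonneg hc0]
  have evalV : ∀ h : ℝ × ℝ, h.1 = 0 → 0 ≤ h.2 → h.2 ≤ c →
      d1 h (pos x) = a + h.2 ∧ d1 h (pos y) = b + h.2 ∧ d1 h (pos z) = c - h.2 := by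
    intro h h1 hl hr
    refine ⟨?_, ?_, ?_⟩
    · rw [Fx, h1, zero_sub, abs_neg, abs_of_nonneg ha0, abs_of_nonneg hl]
    · rw [Fy, h1, zero_add, abs_of_nonneg hb0, abs_of_nonneg hl]
    · rw [Fz, h1, abs_zero, zero_add, abs_of_nonpos (by linarith)]; ring
  -- maps to tight span
  have hFmem : ∀ h ∈ K, (fun w : X => d1 h (pos w)) ∈ TightSpan X := by
    intro h hKh
    have tri : ∀ u v : X, dist u v ≤ d1 h (pos u) + d1 h (pos v) := by
      intro u v
      rw [← dposf u v]
      calc d1 (pos u) (pos v) ≤ d1 (pos u) h + d1 h (pos v) := d1_triangle _ _ _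
        _ = d1 h (pos u) + d1 h (pos v) := by rw [d1_comm_s16]
    constructor
    · exact tri
    · intro u
      simp only []
      rw [iInf3 x y z hcover]
      have n : ∀ p q : X, 0 ≤ d1 h (pos p) + d1 h (pos q) - dist p q := by
        intro p q; have := tri p q; linarith
      rw [hK] at hKh
      rcases hcover u with hu|hu|hu <;> rw [hu] <;>
        rcases hKh with ⟨h2, hl, hr⟩ | ⟨h1, hl, hr⟩
      · obtain ⟨ex, ey, ez⟩ := evalH h h2 hl hr
        have tY : d1 h (pos x) + d1 h (pos y) - dist x y = 0 := by
          rw [ex, ey, dxy]; ring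
        apply le_antisymm _ (le_min (n x x) (le_min (n x y) (n x z)))
        exact le_trans (le_trans (min_le_right _ _) (min_le_left _ _)) (le_of_eq tY)
      · obtain ⟨ex, ey, ez⟩ := evalV h h1 hl hr
        have tZ : d1 h (pos x) + d1 h (pos z) - dist x z = 0 := by
          rw [ex, ez, dxz]; ring
        apply le_antisymm _ (le_min (n x x) (le_min (n x y) (n x z)))
        exact le_trans (le_trans (min_le_right _ _) (min_le_right _ _)) (le_of_eq tZ)
      · obtain ⟨ex, ey, ez⟩ := evalH h h2 hl hr
        have tX : d1 h (pos y) + d1 h (pos x) - dist y x = 0 := by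
          rw [ex, ey, dyx]; ring
        apply le_antisymm _ (le_min (n y x) (le_min (n y y) (n y z)))
        exact le_trans (min_le_left _ _) (le_of_eq tX)
      · obtain ⟨ex, ey, ez⟩ := evalV h h1 hl hr
        have tZ : d1 h (pos y) + d1 h (pos z) - dist y z = 0 := by
          rw [ey, ez, dyz]; ring
        apply le_antisymm _ (le_min (n y x) (le_min (n y y) (n y z)))
        exact le_trans (le_trans (min_le_right _ _) (min_le_right _ _)) (le_of_eq tZ)
      · obtain ⟨ex, ey, ez⟩ := evalH h h2 hl hr
        rcases abs_cases h.1 with ⟨hh, _⟩ | ⟨hh, _⟩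
        · have tX : d1 h (pos z) + d1 h (pos x) - dist z x = 0 := by
            rw [ex, ez, dzx, hh]; ring
          apply le_antisymm _ (le_min (n z x) (le_min (n z y) (n z z)))
          exact le_trans (min_le_left _ _) (le_of_eq tX)
        · have tY : d1 h (pos z) + d1 h (pos y) - dist z y = 0 := by
            rw [ey, ez, dzy, hh]; ring
          apply le_antisymm _ (le_min (n z x) (le_min (n z y) (n z z)))
          exact le_trans (le_trans (min_le_right _ _) (min_le_left _ _)) (le_of_eq tY)
      · obtain ⟨ex, ey, ez⟩ := evalV h h1 hl hr
        have tX : d1 h (pos z) + d1 h (pos x) - dist z x = 0 := by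
          rw [ex, ez, dzx]; ring
        apply le_antisymm _ (le_min (n z x) (le_min (n z y) (n z z)))
        exact le_trans (min_le_left _ _) (le_of_eq tX)
  -- sup formula
  have hsup : ∀ h ∈ K, ∀ h' ∈ K, d1 h h' = ⨆ w : X, |d1 h (pos w) - d1 h' (pos w)| := by
    intro h hh h' hh'
    rw [iSup3 x y z hcover]
    have ub : ∀ w : X, |d1 h (pos w) - d1 h' (pos w)| ≤ d1 h h' := by
      intro w
      rw [abs_sub_le_iff]
      constructor
      · have := d1_triangle h h' (pos w); linarith
      · have t := d1_triangle h' h (pos w); rw [d1_comm_s16 h' h] at t; linarith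
    have ubm : max (|d1 h (pos x) - d1 h' (pos x)|)
        (max (|d1 h (pos y) - d1 h' (pos y)|) (|d1 h (pos z) - d1 h' (pos z)|)) ≤ d1 h h' :=
      max_le (ub x) (max_le (ub y) (ub z))
    rw [hK] at hh hh'
    rcases hh with ⟨h2, hl, hr⟩ | ⟨h1, hl, hr⟩ <;>
      rcases hh' with ⟨h2', hl', hr'⟩ | ⟨h1', hl', hr'⟩
    · obtain ⟨ex, ey, ez⟩ := evalH h h2 hl hr
      obtain ⟨ex', ey', ez'⟩ := evalH h' h2' hl' hr'
      have key : d1 h h' = |d1 h (pos x) - d1 h' (pos x)| := by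
        show |h.1 - h'.1| + |h.2 - h'.2| = _
        rw [h2, h2', ex, ex', sub_self, abs_zero, add_zero,
          show a - h.1 - (a - h'.1) = -(h.1 - h'.1) by ring, abs_neg]
      exact le_antisymm (key ▸ le_max_left _ _) ubm
    · obtain ⟨ex, ey, ez⟩ := evalH h h2 hl hr
      obtain ⟨ex', ey', ez'⟩ := evalV h' h1' hl' hr'
      rcases le_or_gt 0 h.1 with hs | hs
      · have key : d1 h h' = |d1 h (pos x) - d1 h' (pos x)| := by
          show |h.1 - h'.1| + |h.2 - h'.2| = _
          rw [h2, h1', ex, ex', sub_zero, zero_sub, abs_neg, abs_of_nonneg hs,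
            abs_of_nonneg hl',
            show a - h.1 - (a + h'.2) = -(h.1 + h'.2) by ring, abs_neg,
            abs_of_nonneg (by linarith)]
        exact le_antisymm (key ▸ le_max_left _ _) ubm
      · have key : d1 h h' = |d1 h (pos y) - d1 h' (pos y)| := by
          show |h.1 - h'.1| + |h.2 - h'.2| = _
          rw [h2, h1', ey, ey', sub_zero, zero_sub, abs_neg, abs_of_nonpos (le_of_lt hs),
            abs_of_nonneg hl',
            show h.1 + b - (b + h'.2) = h.1 - h'.2 by ring,
            abs_of_nonpos (by linarith)]
          ring
        refine le_antisymm ?_ ubm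
        rw [key]
        exact le_trans (le_max_left _ _) (le_max_right _ _)
    · obtain ⟨ex, ey, ez⟩ := evalV h h1 hl hr
      obtain ⟨ex', ey', ez'⟩ := evalH h' h2' hl' hr'
      rcases le_or_gt 0 h'.1 with hs | hs
      · have key : d1 h h' = |d1 h (pos x) - d1 h' (pos x)| := by
          show |h.1 - h'.1| + |h.2 - h'.2| = _
          rw [h1, h2', ex, ex', zero_sub, abs_neg, sub_zero, abs_of_nonneg hs,
            abs_of_nonneg hl,
            show a + h.2 - (a - h'.1) = h.2 + h'.1 by ring,
            abs_of_nonneg (by linarith)]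
          ring
        exact le_antisymm (key ▸ le_max_left _ _) ubm
      · have key : d1 h h' = |d1 h (pos y) - d1 h' (pos y)| := by
          show |h.1 - h'.1| + |h.2 - h'.2| = _
          rw [h1, h2', ey, ey', zero_sub, abs_neg, sub_zero, abs_of_nonpos (le_of_lt hs),
            abs_of_nonneg hl,
            show b + h.2 - (h'.1 + b) = h.2 - h'.1 by ring,
            abs_of_nonneg (by linarith)]
          ring
        refine le_antisymm ?_ ubm
        rw [key]
        exact le_trans (le_max_left _ _) (le_max_right _ _)
    · obtain ⟨ex, ey, ez⟩ := evalV h h1 hl hr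
      obtain ⟨ex', ey', ez'⟩ := evalV h' h1' hl' hr'
      have key : d1 h h' = |d1 h (pos x) - d1 h' (pos x)| := by
        show |h.1 - h'.1| + |h.2 - h'.2| = _
        rw [h1, h1', ex, ex', sub_self, abs_zero, zero_add,
          show a + h.2 - (a + h'.2) = h.2 - h'.2 by ring]
      exact le_antisymm (key ▸ le_max_left _ _) ubm
  -- injectivity
  have hinj : Set.InjOn (fun h => fun w : X => d1 h (pos w)) K := by
    intro h hh h' hh' heq
    have e : ∀ w : X, d1 h (pos w) = d1 h' (pos w) := fun w => congrFun heq w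
    have h0 : d1 h h' = 0 := by
      rw [hsup h hh h' hh', iSup3 x y z hcover]
      rw [e x, e y, e z]
      simp
    have h0' : |h.1 - h'.1| + |h.2 - h'.2| = 0 := h0
    have a1 := abs_nonneg (h.1 - h'.1)
    have a2 := abs_nonneg (h.2 - h'.2)
    have e1 : |h.1 - h'.1| = 0 := by linarith
    have e2 : |h.2 - h'.2| = 0 := by linarith
    rw [abs_eq_zero, sub_eq_zero] at e1 e2
    exact Prod.ext e1 e2
  -- surjectivity
  have hsurj : Set.SurjOn (fun h => fun w : X => d1 h (pos w)) K (TightSpan X) := by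
    intro f hf
    obtain ⟨hf1, hf2⟩ := hf
    have p0 : 0 ≤ f x := by have := hf1 x x; rw [dist_self] at this; linarith
    have q0 : 0 ≤ f y := by have := hf1 y y; rw [dist_self] at this; linarith
    have r0 : 0 ≤ f z := by have := hf1 z z; rw [dist_self] at this; linarith
    have hpq : a + b ≤ f x + f y := by have := hf1 x y; rwa [dxy] at this
    have hpr : a + c ≤ f x + f z := by have := hf1 x z; rwa [dxz] at this
    have hqr : b + c ≤ f y + f z := by have := hf1 y z; rwa [dyz] at this
    have Cx := hf2 x
    rw [iInf3 x y z hcover, dist_self, dxy, dxz] at Cx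
    have Cy := hf2 y
    rw [iInf3 x y z hcover, dist_self, dyx, dyz] at Cy
    have Cz := hf2 z
    rw [iInf3 x y z hcover, dist_self, dzx, dzy] at Cz
    rcases eq_or_lt_of_le hpq with heq | hlt
    · -- horizontal case
      refine ⟨(a - f x, 0), ?_, ?_⟩
      · rw [hK]; left
        exact ⟨rfl, by simp; linarith, by simp; linarith⟩
      · obtain ⟨ex, ey, ez⟩ := evalH (a - f x, 0) rfl (by simp; linarith) (by simp; linarith)
        have hz : f z = |a - f x| + c := by
          have hge1 : c + (a - f x) ≤ f z := by linarith
          have hge2 : c - (a - f x) ≤ f z := by linarith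
          rcases min3_zero Cz with hcz | hcz | hcz
          · rw [abs_of_nonneg (by linarith : (0:ℝ) ≤ a - f x)]; linarith
          · rw [abs_of_nonpos (by linarith : a - f x ≤ 0)]; linarith
          · have hfz : f z = 0 := by linarith
            have habs : 0 ≤ |a - f x| := abs_nonneg _
            rcases abs_cases (a - f x) with ⟨hh, _⟩ | ⟨hh, _⟩ <;> rw [hh] <;> linarith
        funext w
        rcases hcover w with hw|hw|hw <;> rw [hw]
        · show d1 (a - f x, 0) (pos x) = f x
          rw [ex]; show a - (a - f x) = f x; ring
        · show d1 (a - f x, 0) (pos y) = f y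
          rw [ey]; show a - f x + b = f y; linarith
        · show d1 (a - f x, 0) (pos z) = f z
          rw [ez]; show |a - f x| + c = f z; rw [hz]
    · -- vertical case
      have hpz' : f x + f z = a + c := by
        rcases min3_zero Cx with hcx | hcx | hcx
        · exfalso
          have hfx : f x = 0 := by linarith
          rcases min3_zero Cy with hcy | hcy | hcy
          · linarith
          · linarith
          · linarith
        · exfalso; linarith
        · linarith
      have hqz' : f y + f z = b + c := by
        rcases min3_zero Cy with hcy | hcy | hcy
        · exfalso; linarith
        · exfalso
          have hfy : f y = 0 := by linarith
          rcases min3_zero Cx with hcx | hcx | hcx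
          · linarith
          · linarith
          · linarith
        · linarith
      refine ⟨(0, (f x + f y - a - b) / 2), ?_, ?_⟩
      · rw [hK]; right
        exact ⟨rfl, by simp; linarith, by simp; linarith⟩
      · obtain ⟨ex, ey, ez⟩ := evalV (0, (f x + f y - a - b) / 2) rfl
          (by simp; linarith) (by simp; linarith)
        funext w
        rcases hcover w with hw|hw|hw <;> rw [hw]
        · show d1 (0, (f x + f y - a - b) / 2) (pos x) = f x
          rw [ex]; show a + (f x + f y - a - b) / 2 = f x; linarith
        · show d1 (0, (f x + f y - a - b) / 2) (pos y) = f y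
          rw [ey]; show b + (f x + f y - a - b) / 2 = f y; linarith
        · show d1 (0, (f x + f y - a - b) / 2) (pos z) = f z
          rw [ez]; show c - (f x + f y - a - b) / 2 = f z; linarith
  exact ⟨⟨ha0, hb0, hc0⟩, memK, dposf, ⟨hFmem, hinj, hsurj⟩, hsup⟩
end
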